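/- arXiv:1506.01625 — 6 statements merged into one kernel-verified Lean document; each statement's English description precedes it below -/
import Mathlib

section
/- Let φ be a nondegenerate Bernstein function with extension φ(z) to Re z ≥ 0. Then for every z = a + i b with a > 0, the series ∑_{k=1}^∞ | (φ(k + a + i b)/φ(k + a)) · e^{−i b φ'(k)/φ(k)} − 1 | converges; consequently the infinite product ∏_{k=1}^∞ φ(k + a)/|φ(k + a + i b)| converges to a strictly positive real number. (Paper: core of the proof that the generalized Weierstrass product W_φ is absolutely convergent on the right half-plane, Theorem 'prop:FormMellin1', item (2).) -/
/-!
For `x > 0` the integral representation of `φ` gives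
`φ(x + ib) = φ(x) + ib φ'(x) - ∫ e^{-xy} (e^{-iby} - 1 + iby) μ(dy)`.
Since `|e^{it} - 1 - it| ≤ 2 min(t², |t|)` and `∑_k e^{-(a+k+1)y} ≤ 1/y`, the integral remainders
at `x = a + k + 1` are summable in `k`, with sum at most a multiple of `∫ min(1, y) μ(dy)`.
After dividing by `φ(a+k+1)` and rotating by `e^{-ib φ'(k+1)/φ(k+1)}`, what is left of the `k`-th
term is `|b| (φ'/φ (k+1) - φ'/φ (a+k+1))`, which telescopes because `φ'/φ` is nonnegative and
decreasing, and the second-order error of the rotation, of size `b²/(k+1)²` because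
`x φ'(x) ≤ φ(x)`. Finally `Re φ(x + ib) ≥ φ(x)`, so each factor `φ(a+k+1)/|φ(a+k+1+ib)|` lies
in `(0, 1]` and minus its logarithm is bounded by the `k`-th term of the series: the product is
the exponential of minus a convergent series.
-/

open MeasureTheory Complex Filter Finset Topology

theorem mul_exp_neg_mul_le {x y : ℝ} (hx : 0 < x) (hy : 0 ≤ y) :
    y * Real.exp (-(x * y)) ≤ (1 + x⁻¹) * min 1 y := by
  have hle_one : Real.exp (-(x * y)) ≤ 1 := Real.exp_le_one_iff.2 (by nlinarith)
  have hle_inv : y * Real.exp (-(x * y)) ≤ x⁻¹ := by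
    rw [Real.exp_neg, ← div_eq_mul_inv, div_le_iff₀ (Real.exp_pos _), inv_mul_eq_div,
      le_div_iff₀ hx]
    nlinarith [Real.add_one_le_exp (x * y)]
  rcases le_total y 1 with h | h
  · rw [min_eq_right h]
    nlinarith [inv_pos.2 hx]
  · rw [min_eq_left h]
    linarith [inv_pos.2 hx]

theorem norm_one_sub_cexp_neg_le {w : ℂ} (hw : 0 ≤ w.re) :
    ‖1 - cexp (-w)‖ ≤ 2 * min 1 ‖w‖ := by
  rcases le_total ‖w‖ 1 with h | h
  · rw [min_eq_right h, norm_sub_rev, ← norm_neg w]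
    exact norm_exp_sub_one_le (by rwa [norm_neg])
  · have : ‖cexp (-w)‖ ≤ 1 := by
      rw [norm_exp, neg_re, Real.exp_le_one_iff]; linarith
    rw [min_eq_left h]
    linarith [norm_sub_le (1 : ℂ) (cexp (-w)), norm_one (α := ℂ)]

noncomputable def expRemainder (t : ℝ) : ℂ := cexp (t * I) - 1 - t * I

theorem norm_expRemainder_le (t : ℝ) : ‖expRemainder t‖ ≤ 2 * min (t ^ 2) |t| := by
  have hI : ‖(t : ℂ) * I‖ = |t| := by simp
  have hlin : ‖expRemainder t‖ ≤ 2 * |t| := by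
    have h1 : ‖cexp (t * I) - 1‖ ≤ |t| := by
      simpa [mul_comm] using Real.norm_exp_I_mul_ofReal_sub_one_le (x := t)
    calc ‖expRemainder t‖ ≤ ‖cexp (t * I) - 1‖ + ‖(t : ℂ) * I‖ := norm_sub_le _ _
      _ ≤ 2 * |t| := by rw [hI]; linarith
  rcases le_total |t| 1 with h | h
  · have hsq : ‖expRemainder t‖ ≤ t ^ 2 := by
      simpa [expRemainder, hI, sq_abs] using norm_exp_sub_one_sub_id_le (x := t * I) (by rwa [hI])
    have : t ^ 2 ≤ |t| := by nlinarith [sq_abs t, abs_nonneg t]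
    rw [min_eq_left this]
    nlinarith [sq_nonneg t]
  · have : |t| ≤ t ^ 2 := by nlinarith [sq_abs t, abs_nonneg t]
    rwa [min_eq_right this]

theorem sum_range_exp_neg_mul_le {y : ℝ} (hy : 0 < y) (n : ℕ) :
    ∑ k ∈ range n, Real.exp (-((k + 1) * y)) ≤ y⁻¹ := by
  have hr : Real.exp (-y) < 1 := Real.exp_lt_one_iff.2 (by linarith)
  have hterm (k : ℕ) : Real.exp (-((k + 1) * y)) = Real.exp (-y) ^ (k + 1) := by
    rw [← Real.exp_nat_mul]; push_cast; ring_nf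
  calc ∑ k ∈ range n, Real.exp (-((k + 1) * y))
      = ∑ k ∈ Ico 1 (n + 1), Real.exp (-y) ^ k := by
        rw [Finset.sum_Ico_eq_sum_range, Nat.add_sub_cancel]
        exact Finset.sum_congr rfl fun k _ => by rw [hterm, add_comm]
    _ ≤ Real.exp (-y) ^ 1 / (1 - Real.exp (-y)) :=
        geom_sum_Ico_le_of_lt_one (Real.exp_pos _).le hr
    _ = (Real.exp y - 1)⁻¹ := by
        rw [pow_one, Real.exp_neg]; field_simp
    _ ≤ y⁻¹ := by
        gcongr
        linarith [Real.add_one_le_exp y]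

theorem norm_mul_exp_neg_sub_one_le (w : ℂ) (θ : ℝ) :
    ‖w * cexp (-(θ * I)) - 1‖ ≤ ‖w - 1 - θ * I‖ + ‖expRemainder θ‖ := by
  have hunit : ‖cexp (θ * I)‖ = 1 := by rw [norm_exp]; simp
  calc ‖w * cexp (-(θ * I)) - 1‖ = ‖(w * cexp (-(θ * I)) - 1) * cexp (θ * I)‖ := by
        rw [norm_mul, hunit, mul_one]
    _ = ‖(w - 1 - θ * I) - expRemainder θ‖ := by
        rw [expRemainder, sub_mul, mul_assoc, ← Complex.exp_add, neg_add_cancel, Complex.exp_zero]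
        ring_nf
    _ ≤ _ := norm_sub_le _ _

theorem min_one_mul_le {c y : ℝ} (hy : 0 ≤ y) :
    min 1 (c * y) ≤ max 1 c * min 1 y := by
  rcases le_total y 1 with h | h
  · rw [min_eq_right h]
    exact (min_le_right _ _).trans (mul_le_mul_of_nonneg_right (le_max_right _ _) hy)
  · rw [min_eq_left h, mul_one]
    exact (min_le_left _ _).trans (le_max_left _ _)

theorem one_sub_cexp_ofReal (x y : ℝ) :
    1 - cexp (-(x * y)) = ((1 - Real.exp (-(x * y)) : ℝ) : ℂ) := by
  push_cast; rfl

theorem summable_sub_add_of_antitoneOn {g : ℝ → ℝ} (hg : AntitoneOn g (Set.Ioi 0))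
    (hg0 : ∀ x, 0 < x → 0 ≤ g x) {a : ℝ} (ha : 0 ≤ a) :
    Summable fun k : ℕ => g (k + 1) - g (a + k + 1) := by
  set N := ⌈a⌉₊
  set f : ℕ → ℝ := fun k => g (k + 1)
  have hpos (x : ℝ) (k : ℕ) (hx : 0 ≤ x) : x + k + 1 ∈ Set.Ioi 0 := by
    simp only [Set.mem_Ioi]; positivity
  have hf0 (k : ℕ) : 0 ≤ f k := hg0 _ (by positivity)
  have hshift (k : ℕ) : f (N + k) ≤ g (a + k + 1) := by
    refine hg (hpos a k ha) (by simpa using hpos N k (Nat.cast_nonneg N)) ?_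
    push_cast; linarith [Nat.le_ceil a]
  refine summable_of_sum_range_le (c := ∑ k ∈ range N, f k)
    (fun k => sub_nonneg.2 (hg (by simpa using hpos 0 k le_rfl) (hpos a k ha) (by linarith)))
    fun n => ?_
  have htelescope : ∑ k ∈ range n, (f k - f (N + k))
      = ∑ k ∈ range N, f k - ∑ k ∈ range N, f (n + k) := by
    have h1 := sum_range_add f n N
    have h2 := sum_range_add f N n
    rw [add_comm N n] at h2
    rw [sum_sub_distrib]
    linarith
  calc ∑ k ∈ range n, (g (k + 1) - g (a + k + 1))
      ≤ ∑ k ∈ range n, (f k - f (N + k)) := sum_le_sum fun k _ => by linarith [hshift k]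
    _ ≤ ∑ k ∈ range N, f k := by
        rw [htelescope]; linarith [sum_nonneg fun k (_ : k ∈ range N) => hf0 (n + k)]

theorem exists_pos_hasProd_inv_norm {ι E : Type*} [NormedRing E] [NormOneClass E] {w : ι → E}
    (hw : ∀ i, 1 ≤ ‖w i‖) (hs : Summable fun i => ‖w i - 1‖) :
    ∃ L, 0 < L ∧ HasProd (fun i => ‖w i‖⁻¹) L := by
  have hlog : Summable fun i => Real.log ‖w i‖⁻¹ := by
    refine hs.of_norm_bounded fun i => ?_
    rw [Real.log_inv, norm_neg, Real.norm_of_nonneg (Real.log_nonneg (hw i))]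
    calc Real.log ‖w i‖ ≤ ‖w i‖ - 1 := Real.log_le_sub_one_of_pos (one_pos.trans_le (hw i))
      _ = ‖w i‖ - ‖(1 : E)‖ := by rw [norm_one]
      _ ≤ ‖w i - 1‖ := norm_sub_norm_le _ _
  exact ⟨_, Real.exp_pos _, Real.hasProd_of_hasSum_log
    (fun i => inv_pos.2 (one_pos.trans_le (hw i))) hlog.hasSum⟩

namespace Bernstein

structure IsLevyMeasure (μ : Measure ℝ) : Prop where
  ae_pos : ∀ᵐ y ∂μ, 0 < y
  integrable_min_one : Integrable (fun y : ℝ => min 1 y) μ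

noncomputable def phiC (m σ2 : ℝ) (μ : Measure ℝ) (z : ℂ) : ℂ :=
  m + σ2 * z + ∫ y, (1 - cexp (-(z * y))) ∂μ

noncomputable def phi (m σ2 : ℝ) (μ : Measure ℝ) (x : ℝ) : ℝ :=
  m + σ2 * x + ∫ y, (1 - Real.exp (-(x * y))) ∂μ

noncomputable def phiDeriv (σ2 : ℝ) (μ : Measure ℝ) (x : ℝ) : ℝ :=
  σ2 + ∫ y, y * Real.exp (-(x * y)) ∂μ

variable {m σ2 : ℝ} {μ : Measure ℝ}

namespace IsLevyMeasure

theorem integrable_of_norm_le (hμ : IsLevyMeasure μ) {E : Type*} [NormedAddCommGroup E]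
    {f : ℝ → E} (hf : Continuous f) (C : ℝ) (h : ∀ y, 0 < y → ‖f y‖ ≤ C * min 1 y) :
    Integrable f μ :=
  (hμ.integrable_min_one.const_mul C).mono' hf.aestronglyMeasurable
    (hμ.ae_pos.mono fun y hy => h y hy)

theorem integrable_one_sub_cexp (hμ : IsLevyMeasure μ) {z : ℂ} (hz : 0 ≤ z.re) :
    Integrable (fun y : ℝ => 1 - cexp (-(z * y))) μ := by
  refine hμ.integrable_of_norm_le (by fun_prop) (2 * max 1 ‖z‖) fun y hy => ?_
  have hre : 0 ≤ (z * y).re := by simpa using mul_nonneg hz hy.le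
  calc ‖1 - cexp (-(z * y))‖ ≤ 2 * min 1 (‖z‖ * y) := by
        simpa [abs_of_pos hy] using norm_one_sub_cexp_neg_le hre
    _ ≤ 2 * max 1 ‖z‖ * min 1 y := by
        rw [mul_assoc]; gcongr; exact min_one_mul_le hy.le

theorem integrable_one_sub_exp (hμ : IsLevyMeasure μ) {x : ℝ} (hx : 0 ≤ x) :
    Integrable (fun y : ℝ => 1 - Real.exp (-(x * y))) μ := by
  simpa only [one_sub_cexp_ofReal, RCLike.re_to_complex, ofReal_re] using
    (hμ.integrable_one_sub_cexp (z := x) (by simpa using hx)).re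

theorem integrable_mul_exp_neg (hμ : IsLevyMeasure μ) {x : ℝ} (hx : 0 < x) :
    Integrable (fun y : ℝ => y * Real.exp (-(x * y))) μ := by
  refine hμ.integrable_of_norm_le (by fun_prop) (1 + x⁻¹) fun y hy => ?_
  rw [Real.norm_of_nonneg (by positivity)]
  exact mul_exp_neg_mul_le hx hy.le

theorem integrable_exp_mul_norm_expRemainder (hμ : IsLevyMeasure μ) {x : ℝ} (hx : 0 < x)
    (b : ℝ) : Integrable (fun y : ℝ => Real.exp (-(x * y)) * ‖expRemainder (-(b * y))‖) μ := by
  refine hμ.integrable_of_norm_le (by unfold expRemainder; fun_prop) (2 * |b| * (1 + x⁻¹))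
    fun y hy => ?_
  have hR : ‖expRemainder (-(b * y))‖ ≤ 2 * (|b| * y) := by
    simpa [abs_mul, abs_of_pos hy] using
      (norm_expRemainder_le (-(b * y))).trans
        (mul_le_mul_of_nonneg_left (min_le_right _ _) zero_le_two)
  rw [Real.norm_of_nonneg (by positivity)]
  calc Real.exp (-(x * y)) * ‖expRemainder (-(b * y))‖
      ≤ Real.exp (-(x * y)) * (2 * (|b| * y)) := by gcongr
    _ = 2 * |b| * (y * Real.exp (-(x * y))) := by ring
    _ ≤ 2 * |b| * ((1 + x⁻¹) * min 1 y) :=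
        mul_le_mul_of_nonneg_left (mul_exp_neg_mul_le hx hy.le) (by positivity)
    _ = _ := by ring

end IsLevyMeasure

theorem phiC_ofReal (x : ℝ) : phiC m σ2 μ x = phi m σ2 μ x := by
  simp only [phiC, phi, one_sub_cexp_ofReal, integral_complex_ofReal, ofReal_add, ofReal_mul]

theorem phiDeriv_ofReal (x : ℝ) :
    (phiDeriv σ2 μ x : ℂ) = σ2 + ∫ y, (y : ℂ) * cexp (-(x * y)) ∂μ := by
  rw [phiDeriv, ofReal_add, ← integral_complex_ofReal]
  push_cast; rfl

theorem hasDerivAt_integral_one_sub_cexp (hμ : IsLevyMeasure μ) {x : ℝ} (hx : 0 < x) :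
    HasDerivAt (fun z : ℂ => ∫ y, (1 - cexp (-(z * y))) ∂μ)
      (∫ y, (y : ℂ) * cexp (-(x * y)) ∂μ) x := by
  have hre (z : ℂ) (hz : z ∈ Metric.ball (x : ℂ) (x / 2)) : x / 2 ≤ z.re := by
    have h := (abs_re_le_norm (z - x)).trans (le_of_lt (by simpa [dist_eq] using hz))
    rw [sub_re, ofReal_re] at h
    linarith [(abs_le.1 h).1]
  have hbound : ∀ᵐ (y : ℝ) ∂μ, ∀ z ∈ Metric.ball (x : ℂ) (x / 2),
      ‖(y : ℂ) * cexp (-(z * y))‖ ≤ (1 + (x / 2)⁻¹) * min 1 y := by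
    filter_upwards [hμ.ae_pos] with y hy z hz
    calc ‖(y : ℂ) * cexp (-(z * y))‖ = y * Real.exp (-(z.re * y)) := by
          simp [norm_exp, abs_of_pos hy]
      _ ≤ y * Real.exp (-(x / 2 * y)) := by
          gcongr; exact hre z hz
      _ ≤ _ := mul_exp_neg_mul_le (by positivity) hy.le
  have hderiv : ∀ᵐ (y : ℝ) ∂μ, ∀ z ∈ Metric.ball (x : ℂ) (x / 2),
      HasDerivAt (fun w : ℂ => 1 - cexp (-(w * y))) ((y : ℂ) * cexp (-(z * y))) z :=
    Eventually.of_forall fun y z _ => by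
      simpa [mul_comm] using (((hasDerivAt_id z).mul_const (y : ℂ)).neg.cexp).const_sub 1
  exact (hasDerivAt_integral_of_dominated_loc_of_deriv_le (Metric.ball_mem_nhds _ (by positivity))
    (Eventually.of_forall fun z =>
      (by fun_prop : Continuous fun y : ℝ => 1 - cexp (-(z * y))).aestronglyMeasurable)
    (hμ.integrable_one_sub_cexp (by simpa using hx.le))
    (by fun_prop : Continuous fun y : ℝ => (y : ℂ) * cexp (-(x * y))).aestronglyMeasurable
    hbound (hμ.integrable_min_one.const_mul _) hderiv).2

theorem hasDerivAt_phiC (hμ : IsLevyMeasure μ) {x : ℝ} (hx : 0 < x) :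
    HasDerivAt (phiC m σ2 μ) (phiDeriv σ2 μ x) x := by
  rw [phiDeriv_ofReal]
  exact (((hasDerivAt_id (x : ℂ)).const_mul (σ2 : ℂ)).const_add (m : ℂ)).add
    (hasDerivAt_integral_one_sub_cexp hμ hx) |>.congr_deriv (by simp)

theorem integral_one_sub_exp_pos (hμ : IsLevyMeasure μ) (hμ0 : μ ≠ 0) {x : ℝ} (hx : 0 < x) :
    0 < ∫ y, (1 - Real.exp (-(x * y))) ∂μ := by
  have hpos : ∀ᵐ y ∂μ, 0 < 1 - Real.exp (-(x * y)) := hμ.ae_pos.mono fun y hy => by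
    simpa using mul_pos hx hy
  rw [integral_pos_iff_support_of_nonneg_ae (hpos.mono fun y hy => hy.le)
    (hμ.integrable_one_sub_exp hx.le)]
  have hfull : Function.support (fun y => 1 - Real.exp (-(x * y))) =ᵐ[μ] Set.univ :=
    ae_eq_univ.2 (ae_iff.1 (hpos.mono fun y hy => hy.ne'))
  rw [measure_congr hfull]
  exact Measure.measure_univ_pos.2 hμ0

theorem phi_pos (hμ : IsLevyMeasure μ) (hm : 0 ≤ m) (hσ : 0 ≤ σ2)
    (hnd : ¬ (m = 0 ∧ σ2 = 0 ∧ μ = 0)) {x : ℝ} (hx : 0 < x) : 0 < phi m σ2 μ x := by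
  rcases eq_or_ne μ 0 with rfl | hμ0
  · have : 0 < m ∨ 0 < σ2 := by
      by_contra! h
      exact hnd ⟨le_antisymm h.1 hm, le_antisymm h.2 hσ, rfl⟩
    simp only [phi, integral_zero_measure, add_zero]
    rcases this with h | h <;> positivity
  · have := integral_one_sub_exp_pos hμ hμ0 hx
    unfold phi
    positivity

theorem monotoneOn_phi (hμ : IsLevyMeasure μ) (hσ : 0 ≤ σ2) :
    MonotoneOn (phi m σ2 μ) (Set.Ici 0) := by
  intro x hx x' hx' hxx'
  have hint : ∫ y, (1 - Real.exp (-(x * y))) ∂μ ≤ ∫ y, (1 - Real.exp (-(x' * y))) ∂μ :=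
    integral_mono_ae (hμ.integrable_one_sub_exp hx) (hμ.integrable_one_sub_exp hx')
      (hμ.ae_pos.mono fun y hy => by dsimp only; gcongr)
  unfold phi
  gcongr

theorem phiDeriv_nonneg (hμ : IsLevyMeasure μ) (hσ : 0 ≤ σ2) (x : ℝ) : 0 ≤ phiDeriv σ2 μ x :=
  add_nonneg hσ (integral_nonneg_of_ae (hμ.ae_pos.mono fun y hy => by positivity))

theorem antitoneOn_phiDeriv (hμ : IsLevyMeasure μ) : AntitoneOn (phiDeriv σ2 μ) (Set.Ioi 0) := by
  intro x hx x' hx' hxx'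
  have hint : ∫ y, y * Real.exp (-(x' * y)) ∂μ ≤ ∫ y, y * Real.exp (-(x * y)) ∂μ :=
    integral_mono_ae (hμ.integrable_mul_exp_neg hx') (hμ.integrable_mul_exp_neg hx)
      (hμ.ae_pos.mono fun y hy => by dsimp only; gcongr)
  unfold phiDeriv
  gcongr

theorem mul_phiDeriv_le_phi (hμ : IsLevyMeasure μ) (hm : 0 ≤ m) {x : ℝ} (hx : 0 < x) :
    x * phiDeriv σ2 μ x ≤ phi m σ2 μ x := by
  have hint : ∫ y, x * (y * Real.exp (-(x * y))) ∂μ ≤ ∫ y, (1 - Real.exp (-(x * y))) ∂μ := by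
    refine integral_mono ((hμ.integrable_mul_exp_neg hx).const_mul x)
      (hμ.integrable_one_sub_exp hx.le) fun y => ?_
    have h := Real.add_one_le_exp (x * y)
    have hexp : Real.exp (x * y) * Real.exp (-(x * y)) = 1 := by rw [← Real.exp_add]; simp
    nlinarith [Real.exp_pos (-(x * y))]
  rw [phiDeriv, phi, mul_add, ← integral_const_mul]
  linarith

theorem antitoneOn_phiDeriv_div_phi (hμ : IsLevyMeasure μ) (hm : 0 ≤ m) (hσ : 0 ≤ σ2)
    (hnd : ¬ (m = 0 ∧ σ2 = 0 ∧ μ = 0)) :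
    AntitoneOn (fun x => phiDeriv σ2 μ x / phi m σ2 μ x) (Set.Ioi 0) :=
  fun x hx _ hx' hxx' => div_le_div₀ (phiDeriv_nonneg hμ hσ x)
    (antitoneOn_phiDeriv hμ hx hx' hxx') (phi_pos hμ hm hσ hnd hx)
    (monotoneOn_phi hμ hσ (Set.mem_Ici.2 (le_of_lt hx)) (Set.mem_Ici.2 (le_of_lt hx')) hxx')

theorem phiDeriv_div_phi_le_inv (hμ : IsLevyMeasure μ) (hm : 0 ≤ m) (hσ : 0 ≤ σ2)
    (hnd : ¬ (m = 0 ∧ σ2 = 0 ∧ μ = 0)) {x : ℝ} (hx : 0 < x) :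
    phiDeriv σ2 μ x / phi m σ2 μ x ≤ x⁻¹ := by
  rw [div_le_iff₀ (phi_pos hμ hm hσ hnd hx), inv_mul_eq_div, le_div_iff₀ hx, mul_comm]
  exact mul_phiDeriv_le_phi hμ hm hx

theorem phi_le_re_phiC (hμ : IsLevyMeasure μ) {x : ℝ} (hx : 0 ≤ x) (b : ℝ) :
    phi m σ2 μ x ≤ (phiC m σ2 μ (x + b * I)).re := by
  have hz : 0 ≤ ((x : ℂ) + b * I).re := by simpa using hx
  have hint : ∫ y, (1 - Real.exp (-(x * y))) ∂μ
      ≤ ∫ y, (1 - cexp (-((x + b * I) * y))).re ∂μ := by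
    refine integral_mono_ae (hμ.integrable_one_sub_exp hx) (hμ.integrable_one_sub_cexp hz).re
      (hμ.ae_pos.mono fun y hy => ?_)
    have h := re_le_norm (cexp (-((x + b * I) * y)))
    have hre : (-((x + b * I) * (y : ℂ))).re = -(x * y) := by simp
    rw [norm_exp, hre] at h
    simp only [sub_re, one_re]
    linarith
  have hre : (phiC m σ2 μ (x + b * I)).re
      = m + σ2 * x + ∫ y, (1 - cexp (-((x + b * I) * y))).re ∂μ := by
    have h := integral_re (hμ.integrable_one_sub_cexp hz)
    simp only [RCLike.re_to_complex] at h
    rw [phiC, add_re, ← h]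
    simp
  rw [hre, phi]
  linarith

theorem phiC_add_mul_phiDeriv_sub_phiC (hμ : IsLevyMeasure μ) {x : ℝ} (hx : 0 < x) (b : ℝ) :
    phiC m σ2 μ x + b * I * phiDeriv σ2 μ x - phiC m σ2 μ (x + b * I)
      = ∫ y, Real.exp (-(x * y)) * expRemainder (-(b * y)) ∂μ := by
  have hz : 0 ≤ ((x : ℂ) + b * I).re := by simpa using hx.le
  have h1 := hμ.integrable_one_sub_cexp (z := x) (by simpa using hx.le)
  have h2 : Integrable (fun y : ℝ => ((y * Real.exp (-(x * y)) : ℝ) : ℂ)) μ :=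
    (hμ.integrable_mul_exp_neg hx).ofReal
  have h3 := hμ.integrable_one_sub_cexp hz
  have key : (∫ y, (1 - cexp (-(x * y))) ∂μ) + b * I * (∫ y, ((y * Real.exp (-(x * y)) : ℝ) : ℂ) ∂μ)
      - ∫ y, (1 - cexp (-((x + b * I) * y))) ∂μ
      = ∫ y, Real.exp (-(x * y)) * expRemainder (-(b * y)) ∂μ := by
    have h12 : Integrable (fun y : ℝ =>
        1 - cexp (-(x * y)) + b * I * ((y * Real.exp (-(x * y)) : ℝ) : ℂ)) μ :=
      h1.add (h2.const_mul _)
    rw [← integral_const_mul, ← integral_add h1 (h2.const_mul _), ← integral_sub h12 h3]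
    refine integral_congr_ae (Eventually.of_forall fun y => ?_)
    have hsplit : cexp (-((x + b * I) * y)) = cexp (-(x * y)) * cexp (-(b * y) * I) := by
      rw [← Complex.exp_add]; ring_nf
    simp only [hsplit, expRemainder]
    push_cast
    ring
  rw [phiDeriv, phiC, phiC, ofReal_add, ← integral_complex_ofReal]
  linear_combination key

theorem norm_phiC_div_phi_sub_one_sub_le (hμ : IsLevyMeasure μ) (hm : 0 ≤ m) (hσ : 0 ≤ σ2)
    (hnd : ¬ (m = 0 ∧ σ2 = 0 ∧ μ = 0)) {x' x : ℝ} (hx' : 0 < x') (hx'x : x' ≤ x) (b : ℝ) :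
    ‖phiC m σ2 μ (x + b * I) / phi m σ2 μ x - 1
        - ((b * (phiDeriv σ2 μ x' / phi m σ2 μ x') : ℝ) : ℂ) * I‖
      ≤ (∫ y, Real.exp (-(x * y)) * ‖expRemainder (-(b * y))‖ ∂μ) / phi m σ2 μ x
        + |b| * (phiDeriv σ2 μ x' / phi m σ2 μ x' - phiDeriv σ2 μ x / phi m σ2 μ x) := by
  have hx : 0 < x := hx'.trans_le hx'x
  have hP := phi_pos hμ hm hσ hnd hx
  have hg := antitoneOn_phiDeriv_div_phi hμ hm hσ hnd hx' hx hx'x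
  have hE := phiC_add_mul_phiDeriv_sub_phiC (m := m) (σ2 := σ2) hμ hx b
  rw [phiC_ofReal] at hE
  set P := phi m σ2 μ x
  set E := ∫ y, (Real.exp (-(x * y)) : ℂ) * expRemainder (-(b * y)) ∂μ
  have hP0 : (P : ℂ) ≠ 0 := ofReal_ne_zero.2 hP.ne'
  have hphiC : phiC m σ2 μ (x + b * I) = P + b * I * phiDeriv σ2 μ x - E := by
    rw [← hE]; ring
  have hnormE : ‖E‖ ≤ ∫ y, Real.exp (-(x * y)) * ‖expRemainder (-(b * y))‖ ∂μ :=
    (norm_integral_le_integral_norm _).trans_eq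
      (by simp only [norm_mul, norm_real, Real.norm_eq_abs, Real.abs_exp])
  have hsplit : phiC m σ2 μ (x + b * I) / P - 1
        - ((b * (phiDeriv σ2 μ x' / phi m σ2 μ x') : ℝ) : ℂ) * I
      = -(E / P)
        + ((b * (phiDeriv σ2 μ x / P - phiDeriv σ2 μ x' / phi m σ2 μ x') : ℝ) : ℂ) * I := by
    rw [hphiC]
    push_cast
    field_simp
    ring
  rw [hsplit]
  refine (norm_add_le _ _).trans (add_le_add ?_ (le_of_eq ?_))
  · rw [norm_neg, norm_div, norm_real, Real.norm_of_nonneg hP.le]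
    gcongr
  · rw [norm_mul, norm_I, mul_one, norm_real, Real.norm_eq_abs, abs_mul,
      abs_of_nonpos (sub_nonpos.2 hg), neg_sub]

theorem norm_phiC_div_phi_mul_exp_sub_one_le (hμ : IsLevyMeasure μ) (hm : 0 ≤ m) (hσ : 0 ≤ σ2)
    (hnd : ¬ (m = 0 ∧ σ2 = 0 ∧ μ = 0)) {x' x : ℝ} (hx' : 0 < x') (hx'x : x' ≤ x) (b : ℝ) :
    ‖phiC m σ2 μ (x + b * I) / phi m σ2 μ x
        * cexp (-(((b * (phiDeriv σ2 μ x' / phi m σ2 μ x') : ℝ) : ℂ) * I)) - 1‖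
      ≤ (∫ y, Real.exp (-(x * y)) * ‖expRemainder (-(b * y))‖ ∂μ) / phi m σ2 μ x
        + |b| * (phiDeriv σ2 μ x' / phi m σ2 μ x' - phiDeriv σ2 μ x / phi m σ2 μ x)
        + 2 * (b / x') ^ 2 := by
  set θ := b * (phiDeriv σ2 μ x' / phi m σ2 μ x')
  have hθ : |θ| ≤ |b| / x' := by
    rw [abs_mul, abs_of_nonneg (div_nonneg (phiDeriv_nonneg hμ hσ x')
      (phi_pos hμ hm hσ hnd hx').le), div_eq_mul_inv]
    exact mul_le_mul_of_nonneg_left (phiDeriv_div_phi_le_inv hμ hm hσ hnd hx') (abs_nonneg b)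
  have hR : ‖expRemainder θ‖ ≤ 2 * (b / x') ^ 2 := by
    refine (norm_expRemainder_le θ).trans
      (mul_le_mul_of_nonneg_left ((min_le_left _ _).trans ?_) zero_le_two)
    rw [← sq_abs, div_pow, ← sq_abs b, ← div_pow]
    exact pow_le_pow_left₀ (abs_nonneg θ) hθ 2
  exact (norm_mul_exp_neg_sub_one_le _ θ).trans
    (add_le_add (norm_phiC_div_phi_sub_one_sub_le hμ hm hσ hnd hx' hx'x b) hR)

theorem summable_integral_exp_mul_norm_expRemainder (hμ : IsLevyMeasure μ) {a : ℝ} (ha : 0 ≤ a)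
    (b : ℝ) : Summable fun k : ℕ =>
      ∫ y, Real.exp (-((a + k + 1) * y)) * ‖expRemainder (-(b * y))‖ ∂μ := by
  have hint (k : ℕ) := hμ.integrable_exp_mul_norm_expRemainder (x := a + k + 1) (by positivity) b
  refine summable_of_sum_range_le (c := ∫ y, 2 * (b ^ 2 + |b|) * min 1 y ∂μ)
    (fun k => integral_nonneg fun y => by positivity) fun n => ?_
  rw [← integral_finsetSum _ fun k _ => hint k]
  refine integral_mono_ae (integrable_finsetSum _ fun k _ => hint k)
    (hμ.integrable_min_one.const_mul _) (hμ.ae_pos.mono fun y hy => ?_)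
  have hgeom : ∑ k ∈ range n, Real.exp (-((a + k + 1) * y)) ≤ y⁻¹ :=
    (sum_le_sum fun k _ => Real.exp_le_exp.2 (by nlinarith)).trans
      (sum_range_exp_neg_mul_le hy n)
  have hR : y⁻¹ * ‖expRemainder (-(b * y))‖ ≤ 2 * (b ^ 2 + |b|) * min 1 y := by
    have h := norm_expRemainder_le (-(b * y))
    rw [neg_sq, mul_pow, abs_neg, abs_mul, abs_of_pos hy] at h
    rw [inv_mul_le_iff₀ hy]
    rcases le_total y 1 with hy1 | hy1
    · rw [min_eq_right hy1]
      nlinarith [min_le_left (b ^ 2 * y ^ 2) (|b| * y), abs_nonneg b]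
    · rw [min_eq_left hy1]
      nlinarith [min_le_right (b ^ 2 * y ^ 2) (|b| * y), sq_nonneg b]
  calc ∑ k ∈ range n, Real.exp (-((a + k + 1) * y)) * ‖expRemainder (-(b * y))‖
      = (∑ k ∈ range n, Real.exp (-((a + k + 1) * y))) * ‖expRemainder (-(b * y))‖ :=
        (sum_mul ..).symm
    _ ≤ y⁻¹ * ‖expRemainder (-(b * y))‖ := by gcongr
    _ ≤ _ := hR

/-- The `k`-th term is the quotient of the `(k+1)`-st factors of the generalized Weierstrass
product `W_φ` at `a` and at `a + ib`. -/
theorem summable_norm_phiC_div_phi_mul_exp_sub_one (hμ : IsLevyMeasure μ) (hm : 0 ≤ m)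
    (hσ : 0 ≤ σ2) (hnd : ¬ (m = 0 ∧ σ2 = 0 ∧ μ = 0)) {a : ℝ} (ha : 0 < a) (b : ℝ) :
    Summable fun k : ℕ => ‖phiC m σ2 μ ((a + k + 1 : ℝ) + b * I) / phi m σ2 μ (a + k + 1)
      * cexp (-(((b * (phiDeriv σ2 μ (k + 1) / phi m σ2 μ (k + 1)) : ℝ) : ℂ) * I)) - 1‖ := by
  set g := fun x => phiDeriv σ2 μ x / phi m σ2 μ x
  have hδ := phi_pos hμ hm hσ hnd (x := a + 1) (by positivity)
  have hinv_sq : Summable fun k : ℕ => 2 * (b / (k + 1 : ℝ)) ^ 2 := by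
    have := (summable_nat_add_iff 1).2 (Real.summable_one_div_nat_pow.2 one_lt_two)
    exact (this.mul_left (2 * b ^ 2)).congr fun k => by push_cast; rw [div_pow]; ring
  have htel : Summable fun k : ℕ => |b| * (g (k + 1) - g (a + k + 1)) :=
    (summable_sub_add_of_antitoneOn (antitoneOn_phiDeriv_div_phi hμ hm hσ hnd)
      (fun x hx => div_nonneg (phiDeriv_nonneg hμ hσ x) (phi_pos hμ hm hσ hnd hx).le)
      ha.le).mul_left |b|
  refine Summable.of_nonneg_of_le (fun k => norm_nonneg _) (fun k => ?_)
    ((((summable_integral_exp_mul_norm_expRemainder hμ ha.le b).div_const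
      (phi m σ2 μ (a + 1))).add htel).add hinv_sq)
  refine (norm_phiC_div_phi_mul_exp_sub_one_le hμ hm hσ hnd (by positivity)
    (by linarith) b).trans (add_le_add (add_le_add ?_ le_rfl) le_rfl)
  exact div_le_div_of_nonneg_left (integral_nonneg fun y => by positivity) hδ
    (monotoneOn_phi hμ hσ (by simp only [Set.mem_Ici]; positivity)
      (by simp only [Set.mem_Ici]; positivity) (by simp))

theorem exists_pos_tendsto_prod_phi_div_norm_phiC (hμ : IsLevyMeasure μ) (hm : 0 ≤ m)
    (hσ : 0 ≤ σ2) (hnd : ¬ (m = 0 ∧ σ2 = 0 ∧ μ = 0)) {a : ℝ} (ha : 0 < a) (b : ℝ) :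
    ∃ L, 0 < L ∧ Tendsto (fun n : ℕ => ∏ k ∈ range n,
      phi m σ2 μ (a + k + 1) / ‖phiC m σ2 μ ((a + k + 1 : ℝ) + b * I)‖) atTop (𝓝 L) := by
  set w := fun k : ℕ => phiC m σ2 μ ((a + k + 1 : ℝ) + b * I) / phi m σ2 μ (a + k + 1)
      * cexp (-(((b * (phiDeriv σ2 μ (k + 1) / phi m σ2 μ (k + 1)) : ℝ) : ℂ) * I))
  have hw (k : ℕ) : ‖w k‖ = ‖phiC m σ2 μ ((a + k + 1 : ℝ) + b * I)‖ / phi m σ2 μ (a + k + 1) := by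
    have hP := phi_pos hμ hm hσ hnd (x := a + k + 1) (by positivity)
    simp [w, norm_exp, abs_of_pos hP]
  have hw1 (k : ℕ) : 1 ≤ ‖w k‖ := by
    rw [hw, one_le_div (phi_pos hμ hm hσ hnd (by positivity))]
    exact (phi_le_re_phiC hμ (by positivity) b).trans (re_le_norm _)
  obtain ⟨L, hL, hprod⟩ := exists_pos_hasProd_inv_norm hw1
    (summable_norm_phiC_div_phi_mul_exp_sub_one hμ hm hσ hnd ha b)
  exact ⟨L, hL, hprod.tendsto_prod_nat.congr fun n => prod_congr rfl fun k _ => by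
    rw [hw, inv_div]⟩

theorem deriv_eq_phiDeriv {f : ℂ → ℂ} (hμ : IsLevyMeasure μ)
    (hf : ∀ z : ℂ, 0 ≤ z.re → f z = phiC m σ2 μ z) {x : ℝ} (hx : 0 < x) :
    deriv f x = phiDeriv σ2 μ x := by
  have hev : f =ᶠ[𝓝 (x : ℂ)] phiC m σ2 μ :=
    (continuousAt_const.eventually_lt continuous_re.continuousAt (by simpa using hx)).mono
      fun z hz => hf z hz.le
  exact ((hasDerivAt_phiC hμ hx).congr_of_eventuallyEq hev).deriv

end Bernstein

open Bernstein

/-- absolute convergence of the series defining the generalized Weierstrass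
product of a nondegenerate Bernstein function on the right half-plane, and convergence of
the product `∏ φ(k+a)/|φ(k+a+ib)|` to a positive real number. -/
theorem bernstein_weierstrass_product_convergence
    (φC : ℂ → ℂ) (m σ2 : ℝ) (μ : Measure ℝ)
    (hm : 0 ≤ m) (hσ : 0 ≤ σ2)
    (hμ0 : μ (Set.Iic 0) = 0)
    (hμint : Integrable (fun y : ℝ => min 1 y) μ)
    (hrepC : ∀ z : ℂ, 0 ≤ z.re →
      φC z = (m : ℂ) + (σ2 : ℂ) * z + ∫ y, (1 - Complex.exp (-(z * (y : ℂ)))) ∂μ)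
    (hnd : ¬ (m = 0 ∧ σ2 = 0 ∧ μ = 0)) :
    ∀ a : ℝ, 0 < a → ∀ b : ℝ,
      Summable (fun k : ℕ =>
        ‖φC (((a + (k : ℝ) + 1 : ℝ) : ℂ) + (b : ℂ) * Complex.I)
              / φC (((a + (k : ℝ) + 1 : ℝ) : ℂ))
            * Complex.exp (-(((b * ((deriv φC ((((k : ℝ) + 1 : ℝ)) : ℂ)).re
                / (φC ((((k : ℝ) + 1 : ℝ)) : ℂ)).re) : ℝ) : ℂ) * Complex.I)) - 1‖)
      ∧ ∃ L : ℝ, 0 < L ∧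
          Filter.Tendsto (fun n : ℕ => ∏ k ∈ Finset.range n,
              (φC (((a + (k : ℝ) + 1 : ℝ) : ℂ))).re
                / ‖φC (((a + (k : ℝ) + 1 : ℝ) : ℂ) + (b : ℂ) * Complex.I)‖)
            Filter.atTop (nhds L) := by
  intro a ha b
  have hμ : IsLevyMeasure μ := ⟨ae_iff.2 (by simp only [not_lt]; exact hμ0), hμint⟩
  have hreal (x : ℝ) (hx : 0 ≤ x) : φC x = phi m σ2 μ x := by
    rw [hrepC x (by simpa using hx)]
    exact phiC_ofReal x
  have e1 (k : ℕ) : φC ((a + k + 1 : ℝ) + b * I) = phiC m σ2 μ ((a + k + 1 : ℝ) + b * I) :=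
    hrepC _ (by simpa using (by positivity : (0 : ℝ) ≤ a + k + 1))
  have e2 (k : ℕ) := hreal (a + k + 1) (by positivity)
  have e3 (k : ℕ) := hreal (k + 1) (by positivity)
  have e4 (k : ℕ) := deriv_eq_phiDeriv hμ hrepC (x := k + 1) (by positivity)
  simp only [e1, e2, e3, e4, ofReal_re]
  exact ⟨summable_norm_phiC_div_phi_mul_exp_sub_one hμ hm hσ hnd ha b,
    exists_pos_tendsto_prod_phi_div_norm_phiC hμ hm hσ hnd ha b⟩
end

section
/- Let φ be a nondegenerate Bernstein function of class B_N with σ² = 0 and ∫₀^∞ Π̄(y) dy < ∞, extended to Re z ≥ 0, and set Θ_φ(a,b) = ∫_{a/b}^∞ log( |φ(b u + i b)| / φ(b u) ) du. Then for every a ≥ 0, lim_{b→∞} Θ_φ(a,b) = 0. In particular, if liminf_{b→∞} Θ_φ(0,b) > 0 (i.e. ψ = u φ(u) belongs to the class N_Θ), then σ² > 0 or ∫₀^∞ Π̄(y) dy = ∞, i.e. lim_{u→∞} φ(u) = ∞. (Paper: Theorem 1.3, item (1), first claim: ψ ∈ N_Θ implies r = φ(∞) = ∞.) -/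
open MeasureTheory

/-- The quantity `Θ_φ(a,b) = ∫_{a/b}^∞ log(|φ(bu + ib)|/φ(bu)) du`. -/
noncomputable def Theta (φC : ℂ → ℂ) (a b : ℝ) : ℝ :=
  ∫ u in Set.Ioi (a / b),
    Real.log (‖φC (((b * u : ℝ) : ℂ) + (b : ℂ) * Complex.I)‖ / (φC ((b * u : ℝ) : ℂ)).re)

open Set Filter


lemma aux_cexp_le_two {w : ℂ} (hw : 0 ≤ w.re) : ‖1 - Complex.exp (-w)‖ ≤ 2 := by
  calc ‖1 - Complex.exp (-w)‖ ≤ ‖(1:ℂ)‖ + ‖Complex.exp (-w)‖ := norm_sub_le _ _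
    _ ≤ 1 + 1 := by
        rw [norm_one]
        gcongr
        rw [Complex.norm_exp]
        calc Real.exp (-w).re ≤ Real.exp 0 := by
              apply Real.exp_le_exp.2; simp [Complex.neg_re]; linarith
          _ = 1 := Real.exp_zero
    _ = 2 := by norm_num

lemma aux_cexp_min {w : ℂ} (hw : 0 ≤ w.re) : ‖1 - Complex.exp (-w)‖ ≤ 2 * min 1 ‖w‖ := by
  rcases le_total ‖w‖ 1 with h | h
  · rw [min_eq_right h]
    have h2 : ‖-w‖ ≤ 1 := by rwa [norm_neg]
    have := Complex.norm_exp_sub_one_le h2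
    calc ‖1 - Complex.exp (-w)‖ = ‖Complex.exp (-w) - 1‖ := by
          rw [norm_sub_rev]
      _ ≤ 2 * ‖-w‖ := this
      _ = 2 * ‖w‖ := by rw [norm_neg]
  · rw [min_eq_left h]
    simpa using aux_cexp_le_two hw

lemma aux_one_sub_exp_nonneg {t : ℝ} (ht : 0 ≤ t) : 0 ≤ 1 - Real.exp (-t) := by
  have h : Real.exp (-t) ≤ Real.exp 0 := Real.exp_le_exp.2 (by linarith)
  rw [Real.exp_zero] at h; linarith

lemma aux_one_sub_exp_le_one (t : ℝ) : 1 - Real.exp (-t) ≤ 1 := by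
  have := Real.exp_pos (-t); linarith

lemma aux_one_sub_exp_le (t : ℝ) : 1 - Real.exp (-t) ≤ t := by
  have := Real.add_one_le_exp (-t); linarith

lemma aux_chord {x y : ℝ} (hx0 : 0 ≤ x) (hx1 : x ≤ 1) (hy : 0 ≤ y) :
    x * (1 - Real.exp (-y)) ≤ 1 - Real.exp (-(x * y)) := by
  have h := convexOn_exp.2 (Set.mem_univ (-y)) (Set.mem_univ 0)
    (show (0:ℝ) ≤ x from hx0) (show (0:ℝ) ≤ 1 - x by linarith) (show x + (1-x) = 1 by ring)
  simp only [smul_eq_mul] at h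
  have e1 : x * -y + (1-x) * 0 = -(x*y) := by ring
  rw [e1, Real.exp_zero, mul_one] at h
  linarith

lemma aux_sqrt_add_one {a : ℝ} (ha : 0 ≤ a) : Real.sqrt (a + 1) ≤ Real.sqrt a + 1 := by
  have h1 : Real.sqrt (a+1) ^ 2 = a + 1 := Real.sq_sqrt (by linarith)
  have h2 : Real.sqrt a ^ 2 = a := Real.sq_sqrt ha
  nlinarith [Real.sqrt_nonneg a, Real.sqrt_nonneg (a+1)]

lemma aux_exp_int (k ε : ℝ) (hk : 0 < k) :
    ∫ u in Set.Ioi ε, Real.exp (-(k*u)) = Real.exp (-(k*ε)) / k := by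
  have h := MeasureTheory.integral_comp_mul_right_Ioi (fun x => Real.exp (-x)) ε hk
  simp only [smul_eq_mul] at h
  have h2 : (∫ u in Set.Ioi ε, Real.exp (-(k*u)))
      = ∫ u in Set.Ioi ε, Real.exp (-(u*k)) := by
    congr 1; ext u; ring_nf
  rw [h2, h, integral_exp_neg_Ioi, mul_comm ε k]
  ring

set_option maxHeartbeats 2000000 in
lemma part1 (φC : ℂ → ℂ) (Pib : ℝ → ℝ) (m : ℝ)
    (hm : 0 ≤ m)
    (hPib_nonneg : ∀ y : ℝ, 0 < y → 0 ≤ Pib y)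
    (hPib_anti : ∀ x y : ℝ, 0 < x → x ≤ y → Pib y ≤ Pib x)
    (hPibInt : IntegrableOn Pib (Set.Ioi 0))
    (hrepC : ∀ z : ℂ, 0 ≤ z.re →
      φC z = (m : ℂ) + ∫ y in Set.Ioi (0:ℝ), (1 - Complex.exp (-(z * (y : ℂ)))) * (Pib y : ℂ))
    (hnd : ¬ (m = 0 ∧ ∀ y : ℝ, 0 < y → Pib y = 0))
    (a : ℝ) (ha : 0 ≤ a) :
    Filter.Tendsto (fun b : ℝ => Theta φC a b) Filter.atTop (nhds 0) := by
  have hPm : AEStronglyMeasurable Pib (volume.restrict (Ioi (0:ℝ))) := hPibInt.1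
  set q : ℝ := ∫ y in Ioi (0:ℝ), Pib y with hq
  have hq0 : 0 ≤ q := setIntegral_nonneg measurableSet_Ioi (fun y hy => hPib_nonneg y hy)
  -- measurability of real integrands
  have hMeasR : ∀ x : ℝ, AEStronglyMeasurable (fun y => (1 - Real.exp (-(x*y))) * Pib y)
      (volume.restrict (Ioi (0:ℝ))) := by
    intro x
    exact ((continuous_const.sub
      (Real.continuous_exp.comp ((continuous_const.mul continuous_id).neg))).aestronglyMeasurable).mul hPm
  have hIntR : ∀ x : ℝ, 0 ≤ x →
      IntegrableOn (fun y => (1 - Real.exp (-(x*y))) * Pib y) (Ioi 0) := by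
    intro x hx
    apply Integrable.mono' hPibInt (hMeasR x)
    filter_upwards [ae_restrict_mem measurableSet_Ioi] with y hy
    have h0 := hPib_nonneg y hy
    have h1 : 0 ≤ 1 - Real.exp (-(x*y)) := aux_one_sub_exp_nonneg (mul_nonneg hx (le_of_lt hy))
    have h2 := aux_one_sub_exp_le_one (x*y)
    rw [Real.norm_eq_abs, abs_of_nonneg (mul_nonneg h1 h0)]
    nlinarith
  have hMeasC : ∀ z : ℂ, AEStronglyMeasurable
      (fun y : ℝ => (1 - Complex.exp (-(z*(y:ℂ)))) * ((Pib y : ℝ):ℂ))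
      (volume.restrict (Ioi (0:ℝ))) := by
    intro z
    exact ((continuous_const.sub
      (Complex.continuous_exp.comp ((continuous_const.mul Complex.continuous_ofReal).neg))).aestronglyMeasurable).mul
      (Complex.continuous_ofReal.comp_aestronglyMeasurable hPm)
  have hzyre : ∀ (z : ℂ) (y : ℝ), 0 ≤ z.re → 0 ≤ y → 0 ≤ (z*(y:ℂ)).re := by
    intro z y hz hy
    simp only [Complex.mul_re, Complex.ofReal_re, Complex.ofReal_im, mul_zero, sub_zero]
    exact mul_nonneg hz hy
  have hbnd2 : ∀ (z : ℂ), 0 ≤ z.re → ∀ y ∈ Ioi (0:ℝ),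
      ‖(1 - Complex.exp (-(z*(y:ℂ)))) * ((Pib y : ℝ):ℂ)‖ ≤ 2 * Pib y := by
    intro z hz y hy
    rw [norm_mul, Complex.norm_real, Real.norm_eq_abs, abs_of_nonneg (hPib_nonneg y hy)]
    exact mul_le_mul_of_nonneg_right (aux_cexp_le_two (hzyre z y hz (le_of_lt hy))) (hPib_nonneg y hy)
  have hIntC : ∀ z : ℂ, 0 ≤ z.re →
      IntegrableOn (fun y : ℝ => (1 - Complex.exp (-(z*(y:ℂ)))) * ((Pib y : ℝ):ℂ)) (Ioi 0) := by
    intro z hz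
    apply Integrable.mono' (hPibInt.const_mul 2) (hMeasC z)
    filter_upwards [ae_restrict_mem measurableSet_Ioi] with y hy
    exact hbnd2 z hz y hy
  set R : ℝ → ℝ := fun x => ∫ y in Ioi (0:ℝ), (1 - Real.exp (-(x*y))) * Pib y with hR
  have hRnn : ∀ x : ℝ, 0 ≤ x → 0 ≤ R x := by
    intro x hx
    exact setIntegral_nonneg measurableSet_Ioi (fun y hy =>
      mul_nonneg (aux_one_sub_exp_nonneg (mul_nonneg hx (le_of_lt hy))) (hPib_nonneg y hy))
  have hRq : ∀ x : ℝ, 0 ≤ x → R x ≤ q := by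
    intro x hx
    apply setIntegral_mono_on (hIntR x hx) hPibInt measurableSet_Ioi
    intro y hy
    have h0 := hPib_nonneg y hy
    have h2 := aux_one_sub_exp_le_one (x*y)
    nlinarith
  have hRmono : ∀ x1 x2 : ℝ, 0 ≤ x1 → x1 ≤ x2 → R x1 ≤ R x2 := by
    intro x1 x2 h1 h12
    apply setIntegral_mono_on (hIntR x1 h1) (hIntR x2 (le_trans h1 h12)) measurableSet_Ioi
    intro y hy
    have hp := hPib_nonneg y hy
    have h3 : Real.exp (-(x2*y)) ≤ Real.exp (-(x1*y)) := by
      apply Real.exp_le_exp.2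
      have : x1 * y ≤ x2 * y := mul_le_mul_of_nonneg_right h12 (le_of_lt hy)
      linarith
    nlinarith
  have hReal : ∀ x : ℝ, 0 ≤ x → φC ((x:ℝ):ℂ) = ((m + R x : ℝ):ℂ) := by
    intro x hx
    rw [hrepC (x:ℂ) (by simpa using hx)]
    have h1 : (∫ y in Ioi (0:ℝ), (1 - Complex.exp (-((x:ℂ)*(y:ℂ)))) * ((Pib y:ℝ):ℂ))
        = ((R x : ℝ) : ℂ) := by
      calc (∫ y in Ioi (0:ℝ), (1 - Complex.exp (-((x:ℂ)*(y:ℂ)))) * ((Pib y:ℝ):ℂ))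
          = ∫ y in Ioi (0:ℝ), (((1 - Real.exp (-(x*y))) * Pib y : ℝ) : ℂ) := by
            apply setIntegral_congr_fun measurableSet_Ioi
            intro y hy
            show (1 - Complex.exp (-((x:ℂ)*(y:ℂ)))) * ((Pib y:ℝ):ℂ)
              = (((1 - Real.exp (-(x*y))) * Pib y : ℝ) : ℂ)
            have hxy : -((x:ℂ)*(y:ℂ)) = ((-(x*y) : ℝ) : ℂ) := by push_cast; ring
            rw [hxy, ← Complex.ofReal_exp]
            push_cast; ring
        _ = (((∫ y in Ioi (0:ℝ), (1 - Real.exp (-(x*y))) * Pib y) : ℝ) : ℂ) := integral_ofReal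
        _ = ((R x : ℝ) : ℂ) := rfl
    rw [h1]
    push_cast
    ring
  have hRe : ∀ x : ℝ, 0 ≤ x → (φC ((x:ℝ):ℂ)).re = m + R x := by
    intro x hx; rw [hReal x hx, Complex.ofReal_re]
  -- positivity of the value at 1
  set c : ℝ := m + R 1 with hc
  have hcpos : 0 < c := by
    rcases (not_and_or.1 hnd) with hm0 | hy0
    · have h1 : 0 < m := lt_of_le_of_ne hm (Ne.symm hm0)
      have h2 := hRnn 1 zero_le_one
      rw [hc]; linarith
    · push_neg at hy0
      obtain ⟨y₀, hy₀, hPy₀⟩ := hy0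
      have hPy : 0 < Pib y₀ := lt_of_le_of_ne (hPib_nonneg y₀ hy₀) (Ne.symm hPy₀)
      have hsub : (∫ y in Ioc (y₀/2) y₀, (1 - Real.exp (-(1*y))) * Pib y) ≤ R 1 := by
        apply setIntegral_mono_set (hIntR 1 zero_le_one)
        · filter_upwards [ae_restrict_mem measurableSet_Ioi] with y hy
          exact mul_nonneg (aux_one_sub_exp_nonneg (by simpa using (le_of_lt hy))) (hPib_nonneg y hy)
        · exact HasSubset.Subset.eventuallyLE (fun y hy => lt_trans (by linarith) hy.1)
      have hconst : ((1 - Real.exp (-(1*(y₀/2)))) * Pib y₀) * (volume (Ioc (y₀/2) y₀)).toReal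
          ≤ ∫ y in Ioc (y₀/2) y₀, (1 - Real.exp (-(1*y))) * Pib y := by
        apply setIntegral_ge_of_const_le_real measurableSet_Ioc
        · rw [Real.volume_Ioc]; exact ENNReal.ofReal_ne_top
        · intro y hy
          have hy0' : (0:ℝ) < y := lt_trans (by linarith) hy.1
          have h1 : Pib y₀ ≤ Pib y := hPib_anti y y₀ hy0' hy.2
          have h2 : Real.exp (-(1*y)) ≤ Real.exp (-(1*(y₀/2))) :=
            Real.exp_le_exp.2 (by linarith [hy.1])
          have h3 : 0 ≤ 1 - Real.exp (-(1*(y₀/2))) := aux_one_sub_exp_nonneg (by linarith)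
          nlinarith [hPib_nonneg y hy0']
        · exact (hIntR 1 zero_le_one).mono_set (fun y hy => lt_trans (by linarith) hy.1)
      have hvol : (volume (Ioc (y₀/2) y₀)).toReal = y₀/2 := by
        rw [Real.volume_Ioc, ENNReal.toReal_ofReal (by linarith)]; ring
      have hexp1 : Real.exp (-(1*(y₀/2))) < 1 := by
        have h5 : Real.exp (-(1*(y₀/2))) < Real.exp 0 := Real.exp_lt_exp.2 (by linarith)
        rwa [Real.exp_zero] at h5
      have h4 : 0 < ((1 - Real.exp (-(1*(y₀/2)))) * Pib y₀) * (y₀/2) := by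
        apply mul_pos (mul_pos (by linarith) hPy) (by linarith)
      rw [hvol] at hconst
      rw [hc]
      linarith
  -- global upper bound M
  set M : ℝ := m + 2*q with hM
  have hcM : c ≤ M := by
    have h1 := hRq 1 zero_le_one
    rw [hc, hM]; linarith
  have hMpos : 0 < M := lt_of_lt_of_le hcpos hcM
  have hNle : ∀ z : ℂ, 0 ≤ z.re → ‖φC z‖ ≤ M := by
    intro z hz
    rw [hrepC z hz]
    calc ‖(m:ℂ) + ∫ y in Ioi (0:ℝ), (1 - Complex.exp (-(z*(y:ℂ)))) * ((Pib y:ℝ):ℂ)‖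
        ≤ ‖(m:ℂ)‖ + ‖∫ y in Ioi (0:ℝ), (1 - Complex.exp (-(z*(y:ℂ)))) * ((Pib y:ℝ):ℂ)‖ :=
          norm_add_le _ _
      _ ≤ m + 2*q := by
          have hn1 : ‖(m:ℂ)‖ = m := by
            rw [Complex.norm_real, Real.norm_eq_abs, abs_of_nonneg hm]
          have hn2 : ‖∫ y in Ioi (0:ℝ), (1 - Complex.exp (-(z*(y:ℂ)))) * ((Pib y:ℝ):ℂ)‖
              ≤ ∫ y in Ioi (0:ℝ), 2 * Pib y := by
            apply norm_integral_le_of_norm_le (hPibInt.const_mul 2)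
            filter_upwards [ae_restrict_mem measurableSet_Ioi] with y hy
            exact hbnd2 z hz y hy
          have hn3 : (∫ y in Ioi (0:ℝ), 2 * Pib y) = 2*q := by
            rw [hq]; exact integral_const_mul 2 Pib
          rw [hn1]; rw [hn3] at hn2; linarith
      _ = M := hM.symm
  -- lower bound for the denominator
  have hLow : ∀ x : ℝ, 0 ≤ x → c * min 1 x ≤ m + R x := by
    intro x hx
    rcases le_total 1 x with h | h
    · rw [min_eq_left h]
      have h1 := hRmono 1 x zero_le_one h
      rw [hc]; simp; linarith
    · rw [min_eq_right h]
      have hchord : x * R 1 ≤ R x := by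
        show x * (∫ y in Ioi (0:ℝ), (1 - Real.exp (-(1*y))) * Pib y)
          ≤ ∫ y in Ioi (0:ℝ), (1 - Real.exp (-(x*y))) * Pib y
        rw [← integral_const_mul]
        apply setIntegral_mono_on ((hIntR 1 zero_le_one).const_mul x) (hIntR x hx)
          measurableSet_Ioi
        intro y hy
        have h1 := aux_chord hx h (le_of_lt hy)
        have hp := hPib_nonneg y hy
        rw [show (1:ℝ)*y = y by ring] at *
        nlinarith [aux_chord hx h (le_of_lt hy)]
      have hmx : m * x ≤ m := by nlinarith
      have hcx : c * x = m*x + x * R 1 := by rw [hc]; ring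
      have := hRnn x hx
      linarith
  -- value of the sqrt integral
  have hsq_eq : ∀ u : ℝ, 0 < u → Real.sqrt (1/u) = u ^ (-(1/2) : ℝ) := by
    intro u hu
    rw [Real.rpow_neg hu.le, ← Real.sqrt_eq_rpow, ← Real.sqrt_inv, one_div]
  have hrpow_int : IntegrableOn (fun u : ℝ => Real.sqrt (1/u)) (Ioc (0:ℝ) 1) := by
    have h1 : IntervalIntegrable (fun u:ℝ => u ^ (-(1/2) : ℝ)) volume 0 1 :=
      intervalIntegral.intervalIntegrable_rpow' (by norm_num)
    have h2 : IntegrableOn (fun u:ℝ => u ^ (-(1/2):ℝ)) (Ioc (0:ℝ) 1) := by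
      have h3 := intervalIntegrable_iff.1 h1
      rwa [uIoc_of_le zero_le_one] at h3
    apply h2.congr_fun ?_ measurableSet_Ioc
    intro u hu
    exact (hsq_eq u hu.1).symm
  have hsqrt_int_val : ∀ ε : ℝ, 0 < ε → ε ≤ 1 →
      (∫ u in Ioc (0:ℝ) ε, Real.sqrt (1/u)) = 2 * Real.sqrt ε := by
    intro ε hεpos hε1
    have h1 : (∫ u in Ioc (0:ℝ) ε, Real.sqrt (1/u)) = ∫ u in Ioc (0:ℝ) ε, u ^ (-(1/2):ℝ) :=
      setIntegral_congr_fun measurableSet_Ioc (fun u hu => hsq_eq u hu.1)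
    rw [h1, ← intervalIntegral.integral_of_le hεpos.le,
      integral_rpow (Or.inl (by norm_num))]
    rw [Real.zero_rpow (by norm_num), Real.sqrt_eq_rpow]
    norm_num
    ring
  -- main estimate
  rw [Metric.tendsto_nhds]
  intro δ hδ
  set CM : ℝ := 6 * Real.sqrt (M/c) + 1 with hCM
  have hCMpos : 0 < CM := by positivity
  set ε : ℝ := min 1 ((δ/(2*CM))^2) with hε
  have hεpos : 0 < ε := lt_min one_pos (by positivity)
  have hε1 : ε ≤ 1 := min_le_left _ _
  have hsqε : Real.sqrt ε ≤ δ/(2*CM) := by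
    calc Real.sqrt ε ≤ Real.sqrt ((δ/(2*CM))^2) := Real.sqrt_le_sqrt (min_le_right _ _)
      _ = δ/(2*CM) := Real.sqrt_sq (by positivity)
  set J : ℝ → ENNReal := fun b => ∫⁻ y in Ioi (0:ℝ),
    ENNReal.ofReal (Real.exp (-(max b 1*y*ε)) / (max b 1*y) * (2 * min 1 (max b 1*y))
      * Pib y * (1/c)) with hJ
  have hJptle : ∀ b : ℝ, 1 ≤ b → ∀ y : ℝ, 0 < y →
      Real.exp (-(b*y*ε)) / (b*y) * (2 * min 1 (b*y)) * Pib y * (1/c) ≤ 2/c * Pib y := by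
    intro b hb y hy
    have hp := hPib_nonneg y hy
    have hby : 0 < b*y := by nlinarith
    have h1 : Real.exp (-(b*y*ε)) ≤ 1 := by
      have h1' := Real.exp_le_exp.2 (show -(b*y*ε) ≤ 0 by nlinarith)
      rwa [Real.exp_zero] at h1'
    have h2 : min 1 (b*y) / (b*y) ≤ 1 := by
      rw [div_le_one hby]; exact min_le_right _ _
    have h3 : 0 ≤ min 1 (b*y) := le_min zero_le_one hby.le
    have key : Real.exp (-(b*y*ε)) * (min 1 (b*y) / (b*y)) ≤ 1 :=
      mul_le_one₀ h1 (by positivity) h2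
    calc Real.exp (-(b*y*ε)) / (b*y) * (2 * min 1 (b*y)) * Pib y * (1/c)
        = (Real.exp (-(b*y*ε)) * (min 1 (b*y) / (b*y))) * (2 * Pib y * (1/c)) := by ring
      _ ≤ 1 * (2 * Pib y * (1/c)) := mul_le_mul_of_nonneg_right key (by positivity)
      _ = 2/c * Pib y := by ring
  have hbound_fin : (∫⁻ y in Ioi (0:ℝ), ENNReal.ofReal (2/c * Pib y)) < ⊤ := by
    rw [← ofReal_integral_eq_lintegral_ofReal (hPibInt.const_mul (2/c)) ?_]
    · exact ENNReal.ofReal_lt_top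
    · filter_upwards [ae_restrict_mem measurableSet_Ioi] with y hy
      have := hPib_nonneg y hy
      positivity
  have hJmeas : ∀ b : ℝ, AEMeasurable (fun y : ℝ => ENNReal.ofReal
      (Real.exp (-(max b 1*y*ε)) / (max b 1*y) * (2 * min 1 (max b 1*y)) * Pib y * (1/c)))
      (volume.restrict (Ioi (0:ℝ))) := by
    intro b
    have hgm : Measurable fun y : ℝ =>
        Real.exp (-(max b 1*y*ε)) / (max b 1*y) * (2 * min 1 (max b 1*y)) := by fun_prop
    exact ENNReal.measurable_ofReal.comp_aemeasurable
      ((hgm.aemeasurable.mul hPm.aemeasurable).mul_const (1/c))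
  have hJle : ∀ b : ℝ, J b ≤ ∫⁻ y in Ioi (0:ℝ), ENNReal.ofReal (2/c * Pib y) := by
    intro b
    apply lintegral_mono_ae
    filter_upwards [ae_restrict_mem measurableSet_Ioi] with y hy
    exact ENNReal.ofReal_le_ofReal (hJptle (max b 1) (le_max_right _ _) y hy)
  have hJfin : ∀ b : ℝ, J b ≠ ⊤ :=
    fun b => (lt_of_le_of_lt (hJle b) hbound_fin).ne
  have hmaxtend : Tendsto (fun b : ℝ => max b 1) atTop atTop :=
    tendsto_atTop_mono (fun b => le_max_left b 1) tendsto_id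
  have hJtend : Tendsto J atTop (nhds 0) := by
    apply tendsto_of_seq_tendsto
    intro x hx
    have hx' : Tendsto (fun n => max (x n) 1) atTop atTop := hmaxtend.comp hx
    have h0 : (0 : ENNReal) = ∫⁻ (_ : ℝ) in Ioi (0:ℝ), 0 := by simp
    rw [h0]
    apply tendsto_lintegral_of_dominated_convergence' (fun y => ENNReal.ofReal (2/c * Pib y))
    · intro n; exact hJmeas (x n)
    · intro n
      filter_upwards [ae_restrict_mem measurableSet_Ioi] with y hy
      exact ENNReal.ofReal_le_ofReal (hJptle (max (x n) 1) (le_max_right _ _) y hy)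
    · exact hbound_fin.ne
    · filter_upwards [ae_restrict_mem measurableSet_Ioi] with y hy
      have hp := hPib_nonneg y hy
      show Tendsto (fun n : ℕ => ENNReal.ofReal
        (Real.exp (-(max (x n) 1*y*ε)) / (max (x n) 1*y) * (2 * min 1 (max (x n) 1*y))
          * Pib y * (1/c))) atTop (nhds 0)
      apply tendsto_of_tendsto_of_tendsto_of_le_of_le'
        (g := fun _ : ℕ => (0:ENNReal))
        (h := fun n : ℕ => ENNReal.ofReal ((2*Pib y/(y*c)) * (max (x n) 1)⁻¹))
      · exact tendsto_const_nhds
      · have h1 : Tendsto (fun n : ℕ => (2*Pib y/(y*c)) * (max (x n) 1)⁻¹) atTop (nhds 0) := by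
          have h2 := (tendsto_inv_atTop_zero.comp hx').const_mul (2*Pib y/(y*c))
          simpa using h2
        have h3 := (ENNReal.continuous_ofReal.tendsto 0).comp h1
        simpa [Function.comp_def] using h3
      · exact Eventually.of_forall (fun n => zero_le)
      · apply Eventually.of_forall
        intro n
        apply ENNReal.ofReal_le_ofReal
        set β : ℝ := max (x n) 1 with hβ
        have hb1' : (1:ℝ) ≤ β := le_max_right _ _
        have hy' : (0:ℝ) < y := mem_Ioi.mp hy
        have hby : 0 < β*y := mul_pos (lt_of_lt_of_le one_pos hb1') hy'
        have hb0 : β ≠ 0 := ne_of_gt (lt_of_lt_of_le one_pos hb1')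
        have hy0 : y ≠ 0 := hy'.ne'
        have hc0 : c ≠ 0 := hcpos.ne'
        have h1 : Real.exp (-(β*y*ε)) ≤ 1 := by
          have h1'' : (0:ℝ) ≤ β*y*ε := le_of_lt (mul_pos hby hεpos)
          have h1' := Real.exp_le_exp.2 (show -(β*y*ε) ≤ 0 by linarith)
          rwa [Real.exp_zero] at h1'
        have h3 : 0 ≤ min 1 (β*y) := le_min zero_le_one hby.le
        have e1 : Real.exp (-(β*y*ε)) * min 1 (β*y) ≤ 1 :=
          mul_le_one₀ h1 h3 (min_le_left _ _)
        calc Real.exp (-(β*y*ε)) / (β*y) * (2 * min 1 (β*y)) * Pib y * (1/c)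
            = (Real.exp (-(β*y*ε)) * min 1 (β*y)) * (2 * Pib y * (1/c) / (β*y)) := by ring
          _ ≤ 1 * (2 * Pib y * (1/c) / (β*y)) := mul_le_mul_of_nonneg_right e1 (by positivity)
          _ = 2*Pib y/(y*c) * β⁻¹ := by
              rw [one_mul, div_eq_mul_inv (2*Pib y*(1/c)) (β*y), mul_inv,
                div_eq_mul_inv (2*Pib y) (y*c), mul_inv, one_div]
              ring
  have hJtoReal : Tendsto (fun b => (J b).toReal) atTop (nhds 0) := by
    have h := (ENNReal.tendsto_toReal (show (0:ENNReal) ≠ ⊤ by simp)).comp hJtend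
    simpa [Function.comp_def] using h
  have hev1 : ∀ᶠ b in atTop, (J b).toReal < δ/2 :=
    hJtoReal.eventually (gt_mem_nhds (by linarith : (0:ℝ) < δ/2))
  filter_upwards [hev1, eventually_ge_atTop (max 1 (1/ε))] with b hJb hbmax
  have hb1 : (1:ℝ) ≤ b := le_trans (le_max_left _ _) hbmax
  have hbpos : (0:ℝ) < b := lt_of_lt_of_le one_pos hb1
  have hbε : 1 ≤ b * ε := by
    have h1 : 1/ε ≤ b := le_trans (le_max_right _ _) hbmax
    rw [div_le_iff₀ hεpos] at h1
    linarith
  rw [Real.dist_eq, sub_zero]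
  set f : ℝ → ℝ := fun u =>
    Real.log (‖φC (((b * u : ℝ) : ℂ) + (b : ℂ) * Complex.I)‖ / (φC ((b * u : ℝ) : ℂ)).re) with hfd
  have hfdef : ∀ u : ℝ, f u =
    Real.log (‖φC (((b * u : ℝ) : ℂ) + (b : ℂ) * Complex.I)‖ / (φC ((b * u : ℝ) : ℂ)).re) :=
    fun u => rfl
  have hTheta : Theta φC a b = ∫ u in Ioi (a/b), f u := rfl
  by_cases hInt : IntegrableOn f (Ioi (a/b))
  swap
  · rw [hTheta, integral_undef hInt]
    simpa using hδ
  have hzre' : ∀ u : ℝ, (((b*u : ℝ):ℂ) + (b:ℂ)*Complex.I).re = b*u := by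
    intro u; simp
  -- kernel integrand
  set K : ℝ → ℝ := fun u => ∫ y in Ioi (0:ℝ), Real.exp (-(b*u*y)) * (2 * min 1 (b*y)) * Pib y
    with hKd
  have hKint : ∀ u : ℝ, 0 ≤ u →
      IntegrableOn (fun y => Real.exp (-(b*u*y)) * (2 * min 1 (b*y)) * Pib y) (Ioi 0) := by
    intro u hu
    apply Integrable.mono' (hPibInt.const_mul 2)
    · apply AEStronglyMeasurable.mul _ hPm
      apply Continuous.aestronglyMeasurable
      fun_prop
    · filter_upwards [ae_restrict_mem measurableSet_Ioi] with y hy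
      have hp := hPib_nonneg y hy
      have hy' : (0:ℝ) < y := hy
      have hby : 0 < b*y := mul_pos hbpos hy'
      have he1 : Real.exp (-(b*u*y)) ≤ 1 := by
        have h'' : (0:ℝ) ≤ b*u*y := by positivity
        have h' := Real.exp_le_exp.2 (show -(b*u*y) ≤ 0 by linarith)
        rwa [Real.exp_zero] at h'
      have hm1 : min 1 (b*y) ≤ 1 := min_le_left _ _
      have hm0 : 0 ≤ min 1 (b*y) := le_min zero_le_one hby.le
      have he0 : 0 ≤ Real.exp (-(b*u*y)) := Real.exp_nonneg _
      rw [Real.norm_eq_abs, abs_of_nonneg (by positivity)]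
      nlinarith [mul_nonneg hm0 hp, mul_nonneg he0 hp]
  have hKnn : ∀ u : ℝ, 0 ≤ u → 0 ≤ K u := by
    intro u hu
    apply setIntegral_nonneg measurableSet_Ioi
    intro y hy
    have hp := hPib_nonneg y hy
    have hy' : (0:ℝ) < y := hy
    have hm0 : 0 ≤ min 1 (b*y) := le_min zero_le_one (by positivity)
    have he0 : 0 ≤ Real.exp (-(b*u*y)) := Real.exp_nonneg _
    positivity
  -- key estimate 1 : lower bound
  have hKey1 : ∀ x : ℝ, 0 ≤ x → m + R x ≤ ‖φC ((x:ℂ) + (b:ℂ)*Complex.I)‖ := by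
    intro x hx
    set z : ℂ := (x:ℂ) + (b:ℂ)*Complex.I with hz
    have hzre : z.re = x := by simp [hz]
    have hCi := hIntC z (by rw [hzre]; exact hx)
    have h2 : (φC z).re = m + ∫ y in Ioi (0:ℝ),
        ((1 - Complex.exp (-(z*(y:ℂ)))) * ((Pib y:ℝ):ℂ)).re := by
      rw [hrepC z (by rw [hzre]; exact hx), Complex.add_re, Complex.ofReal_re]
      congr 1
      have h2' := integral_re hCi
      simp only [RCLike.re_to_complex] at h2'
      exact h2'.symm
    have h3 : R x ≤ ∫ y in Ioi (0:ℝ),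
        ((1 - Complex.exp (-(z*(y:ℂ)))) * ((Pib y:ℝ):ℂ)).re := by
      apply setIntegral_mono_on (hIntR x hx) ?_ measurableSet_Ioi ?_
      · have h4 := hCi.re
        simp only [RCLike.re_to_complex] at h4
        exact h4
      · intro y hy
        have hzy : z * (y:ℂ) = ((x*y:ℝ):ℂ) + ((b*y:ℝ):ℂ)*Complex.I := by
          rw [hz]; push_cast; ring
        have hre : ((1 - Complex.exp (-(z*(y:ℂ)))) * ((Pib y:ℝ):ℂ)).re
            = (1 - Real.exp (-(x*y)) * Real.cos (b*y)) * Pib y := by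
          rw [hzy]
          rw [Complex.mul_re]
          have h5 : (-(((x*y:ℝ):ℂ) + ((b*y:ℝ):ℂ)*Complex.I)).re = -(x*y) := by simp
          have h6 : (-(((x*y:ℝ):ℂ) + ((b*y:ℝ):ℂ)*Complex.I)).im = -(b*y) := by simp
          rw [Complex.sub_re, Complex.sub_im, Complex.exp_re, Complex.exp_im, h5, h6]
          simp [Real.cos_neg, Real.sin_neg]
        rw [hre]
        have hp := hPib_nonneg y hy
        have hc1 := Real.cos_le_one (b*y)
        have he := (Real.exp_pos (-(x*y))).le
        nlinarith [mul_nonneg (mul_nonneg he (sub_nonneg.2 hc1)) hp]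
    have h4 : (φC z).re ≤ ‖φC z‖ := by
      exact Complex.re_le_norm _
    rw [h2] at h4
    linarith
  -- key estimate 2 : difference bound
  have hKey2 : ∀ u : ℝ, 0 < u →
      ‖φC (((b*u:ℝ):ℂ) + (b:ℂ)*Complex.I)‖ ≤ (m + R (b*u)) + K u := by
    intro u hu
    have hx : (0:ℝ) ≤ b*u := by nlinarith
    set z : ℂ := ((b*u:ℝ):ℂ) + (b:ℂ)*Complex.I with hz
    have hzre : z.re = b*u := by simp [hz]
    have hCz := hIntC z (by rw [hzre]; exact hx)
    have hCx := hIntC ((b*u:ℝ):ℂ) (by simpa using hx)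
    have hdiffint : φC z - φC ((b*u:ℝ):ℂ) = ∫ y in Ioi (0:ℝ),
        (Complex.exp (-(((b*u:ℝ):ℂ)*(y:ℂ))) - Complex.exp (-(z*(y:ℂ)))) * ((Pib y:ℝ):ℂ) := by
      rw [hrepC z (by rw [hzre]; exact hx), hrepC ((b*u:ℝ):ℂ) (by simpa using hx)]
      rw [add_sub_add_left_eq_sub, ← integral_sub hCz hCx]
      apply setIntegral_congr_fun measurableSet_Ioi
      intro y hy
      show (1 - Complex.exp (-(z*(y:ℂ)))) * ((Pib y:ℝ):ℂ)
          - (1 - Complex.exp (-(((b*u:ℝ):ℂ)*(y:ℂ)))) * ((Pib y:ℝ):ℂ)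
        = (Complex.exp (-(((b*u:ℝ):ℂ)*(y:ℂ))) - Complex.exp (-(z*(y:ℂ)))) * ((Pib y:ℝ):ℂ)
      ring
    have hnormdiff : ‖φC z - φC ((b*u:ℝ):ℂ)‖ ≤ K u := by
      rw [hdiffint, hKd]
      apply norm_integral_le_of_norm_le (hKint u hu.le)
      filter_upwards [ae_restrict_mem measurableSet_Ioi] with y hy
      have hfac : Complex.exp (-(z*(y:ℂ)))
          = Complex.exp (-(((b*u:ℝ):ℂ)*(y:ℂ))) * Complex.exp (-(((b*y:ℝ):ℂ)*Complex.I)) := by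
        rw [← Complex.exp_add]
        congr 1
        rw [hz]; push_cast; ring
      rw [hfac, show Complex.exp (-(((b*u:ℝ):ℂ)*(y:ℂ)))
          - Complex.exp (-(((b*u:ℝ):ℂ)*(y:ℂ))) * Complex.exp (-(((b*y:ℝ):ℂ)*Complex.I))
          = Complex.exp (-(((b*u:ℝ):ℂ)*(y:ℂ))) * (1 - Complex.exp (-(((b*y:ℝ):ℂ)*Complex.I)))
          from by ring]
      rw [norm_mul, norm_mul]
      have hn1 : ‖Complex.exp (-(((b*u:ℝ):ℂ)*(y:ℂ)))‖ = Real.exp (-(b*u*y)) := by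
        rw [Complex.norm_exp]
        congr 1
        simp
      have hn2 : ‖(1:ℂ) - Complex.exp (-(((b*y:ℝ):ℂ)*Complex.I))‖ ≤ 2 * min 1 (b*y) := by
        have h7 := aux_cexp_min (w := ((b*y:ℝ):ℂ)*Complex.I) (by simp)
        have h8 : ‖((b*y:ℝ):ℂ)*Complex.I‖ = b*y := by
          have hy' : (0:ℝ) < y := hy
          rw [norm_mul, Complex.norm_real, Complex.norm_I, Real.norm_eq_abs,
            abs_of_nonneg (by positivity : (0:ℝ) ≤ b*y)]
          ring
        rw [h8] at h7; exact h7
      have hn3 : ‖((Pib y:ℝ):ℂ)‖ = Pib y := by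
        rw [Complex.norm_real, Real.norm_eq_abs, abs_of_nonneg (hPib_nonneg y hy)]
      rw [hn1, hn3]
      calc Real.exp (-(b*u*y)) * ‖(1:ℂ) - Complex.exp (-(((b*y:ℝ):ℂ)*Complex.I))‖ * Pib y
          ≤ Real.exp (-(b*u*y)) * (2 * min 1 (b*y)) * Pib y := by
            apply mul_le_mul_of_nonneg_right _ (hPib_nonneg y hy)
            exact mul_le_mul_of_nonneg_left hn2 (Real.exp_nonneg _)
        _ = _ := rfl
    have hx1 : φC ((b*u:ℝ):ℂ) = ((m + R (b*u) : ℝ):ℂ) := hReal (b*u) hx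
    calc ‖φC z‖ = ‖φC ((b*u:ℝ):ℂ) + (φC z - φC ((b*u:ℝ):ℂ))‖ := by ring_nf
      _ ≤ ‖φC ((b*u:ℝ):ℂ)‖ + ‖φC z - φC ((b*u:ℝ):ℂ)‖ := norm_add_le _ _
      _ ≤ (m + R (b*u)) + K u := by
          apply add_le_add _ hnormdiff
          rw [hx1, Complex.norm_real, Real.norm_eq_abs,
            abs_of_nonneg (by linarith [hRnn (b*u) hx])]
  -- log bounds
  have hf0 : ∀ u : ℝ, 0 < u → 0 ≤ f u := by
    intro u hu
    have hbu0 : 0 < b*u := mul_pos hbpos hu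
    rw [hfdef u, hRe (b*u) hbu0.le]
    apply Real.log_nonneg
    have hmin : 0 < min 1 (b*u) := lt_min one_pos hbu0
    have hDpos : 0 < m + R (b*u) := lt_of_lt_of_le (by positivity) (hLow (b*u) hbu0.le)
    rw [le_div_iff₀ hDpos, one_mul]
    exact hKey1 (b*u) hbu0.le
  have hf1 : ∀ u : ℝ, 0 < u →
      f u ≤ 2*Real.sqrt (M/c) * (Real.sqrt (1/b) * Real.sqrt (1/u) + 1) := by
    intro u hu
    have hbu0 : 0 < b*u := mul_pos hbpos hu
    rw [hfdef u, hRe (b*u) hbu0.le]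
    set N : ℝ := ‖φC (((b*u:ℝ):ℂ) + (b:ℂ)*Complex.I)‖ with hN
    have hmin : 0 < min 1 (b*u) := lt_min one_pos hbu0
    have hDlow : c * min 1 (b*u) ≤ m + R (b*u) := hLow (b*u) hbu0.le
    have hDpos : 0 < m + R (b*u) := lt_of_lt_of_le (by positivity) hDlow
    have hND : m + R (b*u) ≤ N := hKey1 (b*u) hbu0.le
    have hNM : N ≤ M := hNle _ (by rw [hzre' u]; exact hbu0.le)
    have ht : 0 < N / (m + R (b*u)) := div_pos (lt_of_lt_of_le hDpos hND) hDpos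
    have hsq : Real.log (N/(m + R (b*u))) ≤ 2 * Real.sqrt (N/(m + R (b*u))) := by
      have hlsq : Real.log (Real.sqrt (N/(m + R (b*u)))) ≤ Real.sqrt (N/(m + R (b*u))) - 1 :=
        Real.log_le_sub_one_of_pos (Real.sqrt_pos.2 ht)
      have hls : Real.log (Real.sqrt (N/(m + R (b*u)))) = Real.log (N/(m + R (b*u))) / 2 :=
        Real.log_sqrt ht.le
      linarith
    have hstep : N/(m + R (b*u)) ≤ M/c * (1/(b*u) + 1) := by
      have h1 : N/(m + R (b*u)) ≤ M / (c * min 1 (b*u)) :=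
        div_le_div₀ hMpos.le hNM (by positivity) hDlow
      have h2 : M / (c * min 1 (b*u)) = M/c * (1/ min 1 (b*u)) := by
        rw [div_mul_eq_div_div, div_eq_mul_one_div (M/c) (min 1 (b*u))]
      have h3 : 1 / min 1 (b*u) ≤ 1/(b*u) + 1 := by
        rcases le_total 1 (b*u) with h | h
        · rw [min_eq_left h]
          have h0' : 0 ≤ 1/(b*u) := by positivity
          rw [one_div_one]
          linarith
        · rw [min_eq_right h]
          linarith [le_refl (1/(b*u))]
      calc N/(m + R (b*u)) ≤ M/(c * min 1 (b*u)) := h1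
        _ = M/c * (1/min 1 (b*u)) := h2
        _ ≤ M/c * (1/(b*u) + 1) := mul_le_mul_of_nonneg_left h3 (by positivity)
    have hsqrtstep : Real.sqrt (N/(m + R (b*u))) ≤ Real.sqrt (M/c) * (Real.sqrt (1/(b*u)) + 1) := by
      calc Real.sqrt (N/(m + R (b*u))) ≤ Real.sqrt (M/c * (1/(b*u) + 1)) :=
            Real.sqrt_le_sqrt hstep
        _ = Real.sqrt (M/c) * Real.sqrt (1/(b*u) + 1) := Real.sqrt_mul (by positivity) _
        _ ≤ Real.sqrt (M/c) * (Real.sqrt (1/(b*u)) + 1) :=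
            mul_le_mul_of_nonneg_left (aux_sqrt_add_one (by positivity)) (Real.sqrt_nonneg _)
    have hfactor : Real.sqrt (1/(b*u)) = Real.sqrt (1/b) * Real.sqrt (1/u) := by
      rw [show (1:ℝ)/(b*u) = (1/b)*(1/u) by rw [div_mul_div_comm, one_mul],
        Real.sqrt_mul (by positivity)]
    rw [hfactor] at hsqrtstep
    linarith
  have hf2 : ∀ u : ℝ, 0 < u → 1 ≤ b*u → f u ≤ K u * (1/c) := by
    intro u hu hbu
    have hbu0 : 0 < b*u := mul_pos hbpos hu
    rw [hfdef u, hRe (b*u) hbu0.le]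
    set N : ℝ := ‖φC (((b*u:ℝ):ℂ) + (b:ℂ)*Complex.I)‖ with hN
    have hDc : c ≤ m + R (b*u) := by
      have h1 := hLow (b*u) hbu0.le
      rw [min_eq_left hbu, mul_one] at h1
      exact h1
    have hDpos : 0 < m + R (b*u) := lt_of_lt_of_le hcpos hDc
    have hND : m + R (b*u) ≤ N := hKey1 (b*u) hbu0.le
    have hNK : N ≤ (m + R (b*u)) + K u := hKey2 u hu
    have ht : 0 < N / (m + R (b*u)) := div_pos (lt_of_lt_of_le hDpos hND) hDpos
    have hlog := Real.log_le_sub_one_of_pos ht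
    have h3 : N / (m + R (b*u)) - 1 = (N - (m + R (b*u))) / (m + R (b*u)) := by
      field_simp
    have h4 : (N - (m + R (b*u))) / (m + R (b*u)) ≤ K u / c :=
      div_le_div₀ (hKnn u hu.le) (by linarith) hcpos hDc
    calc Real.log (N / (m + R (b*u))) ≤ N / (m + R (b*u)) - 1 := hlog
      _ = (N - (m + R (b*u))) / (m + R (b*u)) := h3
      _ ≤ K u / c := h4
      _ = K u * (1/c) := by rw [div_eq_mul_one_div]
  -- split the integral
  have hab : 0 ≤ a/b := div_nonneg ha hbpos.le
  set s : ℝ := max (a/b) ε with hs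
  have hsplit : Ioc (a/b) s ∪ Ioi s = Ioi (a/b) := Ioc_union_Ioi_eq_Ioi (le_max_left _ _)
  have hint1 : IntegrableOn f (Ioc (a/b) s) := hInt.mono_set (fun u hu => hu.1)
  have hint2 : IntegrableOn f (Ioi s) := hInt.mono_set (Ioi_subset_Ioi (le_max_left _ _))
  have hdisj : Disjoint (Ioc (a/b) s) (Ioi s) := Ioc_disjoint_Ioi le_rfl
  have hTsum : Theta φC a b = (∫ u in Ioc (a/b) s, f u) + ∫ u in Ioi s, f u := by
    rw [hTheta, ← hsplit, setIntegral_union hdisj measurableSet_Ioi hint1 hint2]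
  have hsub1 : Ioc (a/b) s ⊆ Ioc 0 ε := by
    intro u hu
    refine ⟨lt_of_le_of_lt hab hu.1, ?_⟩
    rcases le_total (a/b) ε with h | h
    · rw [hs, max_eq_right h] at hu
      exact hu.2
    · rw [hs, max_eq_left h] at hu
      exact ((not_le.2 hu.1) hu.2).elim
  -- region 1
  set g1 : ℝ → ℝ := fun u => 2*Real.sqrt (M/c) * (Real.sqrt (1/b) * Real.sqrt (1/u) + 1)
    with hg1
  have hg1nn : ∀ u : ℝ, 0 ≤ g1 u := by
    intro u
    have := Real.sqrt_nonneg (M/c); have := Real.sqrt_nonneg (1/b); have := Real.sqrt_nonneg (1/u)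
    positivity
  have hg1int : IntegrableOn g1 (Ioc 0 ε) := by
    apply Integrable.const_mul
    apply Integrable.add
    · exact ((hrpow_int.mono_set (Ioc_subset_Ioc_right hε1)).const_mul _)
    · exact integrableOn_const measure_Ioc_lt_top.ne
  have hreg1 : (∫ u in Ioc (a/b) s, f u) ≤ 6 * Real.sqrt (M/c) * Real.sqrt ε := by
    have hstep1 : (∫ u in Ioc (a/b) s, f u) ≤ ∫ u in Ioc (a/b) s, g1 u :=
      setIntegral_mono_on hint1 (hg1int.mono_set hsub1) measurableSet_Ioc
        (fun u hu => hf1 u (lt_of_le_of_lt hab hu.1))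
    have hstep2 : (∫ u in Ioc (a/b) s, g1 u) ≤ ∫ u in Ioc 0 ε, g1 u := by
      apply setIntegral_mono_set hg1int
      · exact Eventually.of_forall (fun u => hg1nn u)
      · exact HasSubset.Subset.eventuallyLE hsub1
    have hval : (∫ u in Ioc 0 ε, g1 u)
        = 2*Real.sqrt (M/c) * (Real.sqrt (1/b) * (2*Real.sqrt ε) + ε) := by
      rw [hg1, integral_const_mul]
      congr 1
      rw [integral_add ((hrpow_int.mono_set (Ioc_subset_Ioc_right hε1)).const_mul _)
        (integrableOn_const measure_Ioc_lt_top.ne)]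
      rw [integral_const_mul, hsqrt_int_val ε hεpos hε1]
      rw [setIntegral_const, Measure.real, Real.volume_Ioc, smul_eq_mul, mul_one, sub_zero,
        ENNReal.toReal_ofReal hεpos.le]
    have hfin1 : 2*Real.sqrt (M/c) * (Real.sqrt (1/b) * (2*Real.sqrt ε) + ε)
        ≤ 6 * Real.sqrt (M/c) * Real.sqrt ε := by
      have h1 : Real.sqrt (1/b) ≤ 1 := by
        rw [show (1:ℝ) = Real.sqrt 1 by rw [Real.sqrt_one]]
        exact Real.sqrt_le_sqrt (by rw [div_le_one hbpos] at *; linarith [Real.sqrt_one])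
      have h2 : ε ≤ Real.sqrt ε := by
        have h3 := Real.sq_sqrt hεpos.le
        have h4 : Real.sqrt ε ≤ 1 := by
          rw [show (1:ℝ) = Real.sqrt 1 by rw [Real.sqrt_one]]
          exact Real.sqrt_le_sqrt hε1
        nlinarith [Real.sqrt_nonneg ε]
      have h5 := Real.sqrt_nonneg (M/c)
      have h6 := Real.sqrt_nonneg ε
      have h7 := Real.sqrt_nonneg (1/b)
      nlinarith [mul_nonneg h5 h6]
    calc (∫ u in Ioc (a/b) s, f u) ≤ ∫ u in Ioc 0 ε, g1 u := le_trans hstep1 hstep2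
      _ = 2*Real.sqrt (M/c) * (Real.sqrt (1/b) * (2*Real.sqrt ε) + ε) := hval
      _ ≤ 6 * Real.sqrt (M/c) * Real.sqrt ε := hfin1
  -- region 2
  have hreg2 : (∫ u in Ioi s, f u) ≤ (J b).toReal := by
    have hspos : 0 < s := lt_of_lt_of_le hεpos (le_max_right _ _)
    have hfnn' : 0 ≤ᵐ[volume.restrict (Ioi s)] f := by
      filter_upwards [ae_restrict_mem measurableSet_Ioi] with u hu
      exact hf0 u (lt_trans hspos hu)
    rw [integral_eq_lintegral_of_nonneg_ae hfnn' hint2.1]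
    apply ENNReal.toReal_mono (hJfin b)
    have hmaxb : max b 1 = b := max_eq_left hb1
    -- pointwise domination by the kernel lintegral
    have hG : ∀ u : ℝ, u ∈ Ioi ε → ENNReal.ofReal (f u) ≤
        ∫⁻ y in Ioi (0:ℝ), ENNReal.ofReal
          (Real.exp (-(b*u*y)) * (2 * min 1 (b*y)) * Pib y * (1/c)) := by
      intro u hu
      have hu0 : 0 < u := lt_trans hεpos hu
      have huε : ε ≤ u := le_of_lt hu
      have hbu : 1 ≤ b*u := le_trans hbε (by nlinarith)
      have hKcint : IntegrableOn
          (fun y => Real.exp (-(b*u*y)) * (2 * min 1 (b*y)) * Pib y * (1/c)) (Ioi 0) :=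
        (hKint u hu0.le).mul_const (1/c)
      have h1 : f u ≤ ∫ y in Ioi (0:ℝ),
          Real.exp (-(b*u*y)) * (2 * min 1 (b*y)) * Pib y * (1/c) := by
        have h2 := hf2 u hu0 hbu
        rwa [hKd, ← integral_mul_const] at h2
      calc ENNReal.ofReal (f u)
          ≤ ENNReal.ofReal (∫ y in Ioi (0:ℝ),
            Real.exp (-(b*u*y)) * (2 * min 1 (b*y)) * Pib y * (1/c)) :=
            ENNReal.ofReal_le_ofReal h1
        _ = ∫⁻ y in Ioi (0:ℝ), ENNReal.ofReal
            (Real.exp (-(b*u*y)) * (2 * min 1 (b*y)) * Pib y * (1/c)) := by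
            apply ofReal_integral_eq_lintegral_ofReal hKcint
            filter_upwards [ae_restrict_mem measurableSet_Ioi] with y hy
            have hp := hPib_nonneg y hy
            have hy' : (0:ℝ) < y := hy
            have hm0 : 0 ≤ min 1 (b*y) := le_min zero_le_one (by positivity)
            have he0 : 0 ≤ Real.exp (-(b*u*y)) := Real.exp_nonneg _
            positivity
    have hGmeas : AEMeasurable (Function.uncurry fun (u y : ℝ) => ENNReal.ofReal
        (Real.exp (-(b*u*y)) * (2 * min 1 (b*y)) * Pib y * (1/c)))
        ((volume.restrict (Ioi ε)).prod (volume.restrict (Ioi (0:ℝ)))) := by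
      have hPp : AEStronglyMeasurable (fun p : ℝ × ℝ => Pib p.2)
          ((volume.restrict (Ioi ε)).prod (volume.restrict (Ioi (0:ℝ)))) := hPm.comp_snd
      have hgm : Measurable fun p : ℝ × ℝ =>
          Real.exp (-(b*p.1*p.2)) * (2 * min 1 (b*p.2)) := by fun_prop
      exact ENNReal.measurable_ofReal.comp_aemeasurable
        ((hgm.aemeasurable.mul hPp.aemeasurable).mul_const (1/c))
    calc ∫⁻ u in Ioi s, ENNReal.ofReal (f u)
        ≤ ∫⁻ u in Ioi ε, ENNReal.ofReal (f u) :=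
          lintegral_mono' (Measure.restrict_mono (Ioi_subset_Ioi (le_max_right _ _)) le_rfl)
            le_rfl
      _ ≤ ∫⁻ u in Ioi ε, ∫⁻ y in Ioi (0:ℝ), ENNReal.ofReal
            (Real.exp (-(b*u*y)) * (2 * min 1 (b*y)) * Pib y * (1/c)) := by
          apply lintegral_mono_ae
          filter_upwards [ae_restrict_mem measurableSet_Ioi] with u hu
          exact hG u hu
      _ = ∫⁻ y in Ioi (0:ℝ), ∫⁻ u in Ioi ε, ENNReal.ofReal
            (Real.exp (-(b*u*y)) * (2 * min 1 (b*y)) * Pib y * (1/c)) :=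
          lintegral_lintegral_swap hGmeas
      _ = J b := by
          rw [hJ]
          apply lintegral_congr_ae
          filter_upwards [ae_restrict_mem measurableSet_Ioi] with y hy
          have hy' : (0:ℝ) < y := hy
          have hby : 0 < b*y := mul_pos hbpos hy'
          have hp := hPib_nonneg y hy'
          have hsplit2 : ∀ u:ℝ, ENNReal.ofReal
              (Real.exp (-(b*u*y)) * (2 * min 1 (b*y)) * Pib y * (1/c))
              = ENNReal.ofReal (Real.exp (-((b*y)*u)))
                * ENNReal.ofReal (2 * min 1 (b*y) * Pib y * (1/c)) := by
            intro u
            rw [← ENNReal.ofReal_mul (Real.exp_nonneg _)]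
            congr 1
            rw [show (b*y)*u = b*u*y by ring]
            ring
          simp only [hsplit2]
          rw [lintegral_mul_const'' _ (by fun_prop :
            AEMeasurable (fun u => ENNReal.ofReal (Real.exp (-((b*y)*u))))
              (volume.restrict (Ioi ε)))]
          have hexpint : (∫⁻ u in Ioi ε, ENNReal.ofReal (Real.exp (-((b*y)*u))))
              = ENNReal.ofReal (Real.exp (-((b*y)*ε)) / (b*y)) := by
            rw [← ofReal_integral_eq_lintegral_ofReal]
            · rw [aux_exp_int (b*y) ε hby]
            · have h9 := exp_neg_integrableOn_Ioi ε hby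
              apply h9.congr_fun ?_ measurableSet_Ioi
              intro u hu
              show Real.exp (-(b*y)*u) = Real.exp (-((b*y)*u))
              rw [neg_mul]
            · exact Eventually.of_forall (fun u => Real.exp_nonneg _)
          rw [hexpint, ← ENNReal.ofReal_mul (by positivity)]
          rw [hmaxb]
          congr 1
          rw [show (b*y)*ε = b*y*ε by ring]
          ring
  -- conclusion
  have hnn1 : 0 ≤ ∫ u in Ioc (a/b) s, f u :=
    setIntegral_nonneg measurableSet_Ioc (fun u hu => hf0 u (lt_of_le_of_lt hab hu.1))
  have hnn2 : 0 ≤ ∫ u in Ioi s, f u :=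
    setIntegral_nonneg measurableSet_Ioi
      (fun u hu => hf0 u (lt_trans (lt_of_lt_of_le hεpos (le_max_right _ _)) hu))
  have hlt : 6*Real.sqrt (M/c)*Real.sqrt ε < δ/2 := by
    set d : ℝ := δ/(2*CM) with hd
    have hdpos : 0 < d := by positivity
    have h1 : 6*Real.sqrt (M/c)*Real.sqrt ε ≤ 6*Real.sqrt (M/c)*d :=
      mul_le_mul_of_nonneg_left hsqε (by positivity)
    have h2 : CM * d = δ/2 := by
      rw [hd, hCM]
      field_simp
    have h5 := Real.sqrt_nonneg (M/c)
    nlinarith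
  rw [abs_of_nonneg (by rw [hTsum]; linarith)]
  rw [hTsum]
  linarith [hreg1, hreg2, hJb]

set_option maxHeartbeats 1000000 in
/-- for a `B_N` Bernstein function with `σ² = 0` and `∫₀^∞ Π̄ < ∞` one has
`Θ_φ(a,b) → 0` as `b → ∞`; hence `liminf_b Θ_φ(0,b) > 0` forces `lim_{u→∞} φ(u) = ∞`
(equivalently `σ² > 0` or `∫₀^∞ Π̄ = ∞`). -/
theorem bernstein_Theta_vanishing_compound_poisson
    (φC : ℂ → ℂ) (Pib : ℝ → ℝ) (m σ2 : ℝ)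
    (hm : 0 ≤ m) (hσ : 0 ≤ σ2)
    (hPib_nonneg : ∀ y : ℝ, 0 < y → 0 ≤ Pib y)
    (hPib_anti : ∀ x y : ℝ, 0 < x → x ≤ y → Pib y ≤ Pib x)
    (hPib_min_int : IntegrableOn (fun y : ℝ => min 1 y * Pib y) (Set.Ioi 0))
    (hrepC : ∀ z : ℂ, 0 ≤ z.re →
      φC z = (m : ℂ) + (σ2 : ℂ) * z
        + ∫ y in Set.Ioi (0:ℝ), (1 - Complex.exp (-(z * (y : ℂ)))) * (Pib y : ℂ))
    (hnd : ¬ (m = 0 ∧ σ2 = 0 ∧ ∀ y : ℝ, 0 < y → Pib y = 0)) :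
    (σ2 = 0 → IntegrableOn Pib (Set.Ioi 0) →
      ∀ a : ℝ, 0 ≤ a → Filter.Tendsto (fun b : ℝ => Theta φC a b) Filter.atTop (nhds 0))
    ∧ (0 < Filter.liminf (fun b : ℝ => Theta φC 0 b) Filter.atTop →
        (0 < σ2 ∨ ¬ IntegrableOn Pib (Set.Ioi 0))
        ∧ Filter.Tendsto (fun u : ℝ => (φC ((u : ℝ) : ℂ)).re) Filter.atTop Filter.atTop) := by
  have hpart1 : σ2 = 0 → IntegrableOn Pib (Set.Ioi 0) → ∀ a : ℝ, 0 ≤ a →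
      Filter.Tendsto (fun b : ℝ => Theta φC a b) Filter.atTop (nhds 0) := by
    intro hσ2 hPibInt a ha
    apply part1 φC Pib m hm hPib_nonneg hPib_anti hPibInt ?_ ?_ a ha
    · intro z hz
      rw [hrepC z hz, hσ2]
      simp
    · rintro ⟨h1, h2⟩
      exact hnd ⟨h1, hσ2, h2⟩
  refine ⟨hpart1, ?_⟩
  intro hliminf
  have hno : ¬ (σ2 = 0 ∧ IntegrableOn Pib (Set.Ioi 0)) := by
    rintro ⟨h1, h2⟩
    have htend := hpart1 h1 h2 0 le_rfl
    have h3 := htend.liminf_eq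
    rw [h3] at hliminf
    exact lt_irrefl 0 hliminf
  have hOr : 0 < σ2 ∨ ¬ IntegrableOn Pib (Set.Ioi 0) := by
    by_cases hσ0 : σ2 = 0
    · exact Or.inr (fun h2 => hno ⟨hσ0, h2⟩)
    · exact Or.inl (lt_of_le_of_ne hσ (Ne.symm hσ0))
  refine ⟨hOr, ?_⟩
  -- representation of the real part
  have hPm2 : AEStronglyMeasurable Pib (volume.restrict (Set.Ioi (0:ℝ))) := by
    apply AEMeasurable.aestronglyMeasurable
    apply aemeasurable_restrict_of_antitoneOn measurableSet_Ioi
    intro x hx y hy hxy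
    exact hPib_anti x y hx hxy
  set Rm : ℝ → ℝ := fun u => ∫ y in Set.Ioi (0:ℝ), (1 - Real.exp (-(u*y))) * Pib y with hRmd
  have hRe2 : ∀ u : ℝ, 0 ≤ u → (φC ((u:ℝ):ℂ)).re = m + σ2*u + Rm u := by
    intro u hu
    rw [hrepC (u:ℂ) (by simpa using hu)]
    have h1 : (∫ y in Set.Ioi (0:ℝ), (1 - Complex.exp (-(((u:ℝ):ℂ)*(y:ℂ)))) * ((Pib y:ℝ):ℂ))
        = ((Rm u : ℝ) : ℂ) := by
      calc (∫ y in Set.Ioi (0:ℝ), (1 - Complex.exp (-(((u:ℝ):ℂ)*(y:ℂ)))) * ((Pib y:ℝ):ℂ))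
          = ∫ y in Set.Ioi (0:ℝ), (((1 - Real.exp (-(u*y))) * Pib y : ℝ) : ℂ) := by
            apply setIntegral_congr_fun measurableSet_Ioi
            intro y hy
            show (1 - Complex.exp (-(((u:ℝ):ℂ)*(y:ℂ)))) * ((Pib y:ℝ):ℂ)
              = (((1 - Real.exp (-(u*y))) * Pib y : ℝ) : ℂ)
            have hxy : -(((u:ℝ):ℂ)*(y:ℂ)) = ((-(u*y) : ℝ) : ℂ) := by push_cast; ring
            rw [hxy, ← Complex.ofReal_exp]
            push_cast; ring
        _ = (((∫ y in Set.Ioi (0:ℝ), (1 - Real.exp (-(u*y))) * Pib y) : ℝ) : ℂ) :=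
            integral_ofReal
        _ = ((Rm u : ℝ) : ℂ) := rfl
    rw [h1]
    have h2 : (m:ℂ) + (σ2:ℂ)*((u:ℝ):ℂ) + ((Rm u:ℝ):ℂ) = (((m + σ2*u + Rm u : ℝ)):ℂ) := by
      push_cast; ring
    rw [h2, Complex.ofReal_re]
  have hIntR2 : ∀ u : ℝ, 0 ≤ u → IntegrableOn
      (fun y => (1 - Real.exp (-(u*y))) * Pib y) (Set.Ioi 0) := by
    intro u hu
    apply Integrable.mono' (hPib_min_int.const_mul (max 1 u))
    · exact ((continuous_const.sub (Real.continuous_exp.comp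
        ((continuous_const.mul continuous_id).neg))).aestronglyMeasurable).mul hPm2
    · filter_upwards [ae_restrict_mem measurableSet_Ioi] with y hy
      have hy' : (0:ℝ) < y := hy
      have hp := hPib_nonneg y hy'
      have h1 : 0 ≤ 1 - Real.exp (-(u*y)) := aux_one_sub_exp_nonneg (by positivity)
      rw [Real.norm_eq_abs, abs_of_nonneg (mul_nonneg h1 hp)]
      have h2 : 1 - Real.exp (-(u*y)) ≤ min 1 (u*y) :=
        le_min (aux_one_sub_exp_le_one _) (aux_one_sub_exp_le _)
      have h3 : min 1 (u*y) ≤ max 1 u * min 1 y := by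
        rcases le_total y 1 with h | h
        · rw [min_eq_right h]
          calc min 1 (u*y) ≤ u*y := min_le_right _ _
            _ ≤ max 1 u * y := mul_le_mul_of_nonneg_right (le_max_right 1 u) hy'.le
        · rw [min_eq_left h]
          calc min 1 (u*y) ≤ 1 := min_le_left _ _
            _ ≤ max 1 u := le_max_left _ _
            _ = max 1 u * 1 := (mul_one _).symm
      calc (1 - Real.exp (-(u*y))) * Pib y ≤ (max 1 u * min 1 y) * Pib y :=
            mul_le_mul_of_nonneg_right (le_trans h2 h3) hp
        _ = max 1 u * (min 1 y * Pib y) := by ring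
  have hRmnn : ∀ u : ℝ, 0 ≤ u → 0 ≤ Rm u := by
    intro u hu
    apply setIntegral_nonneg measurableSet_Ioi
    intro y hy
    have hy' : (0:ℝ) < y := hy
    exact mul_nonneg (aux_one_sub_exp_nonneg (by positivity)) (hPib_nonneg y hy)
  rcases hOr with hσpos | hnInt
  · -- σ² > 0
    apply tendsto_atTop_mono' atTop ?_ (Tendsto.const_mul_atTop hσpos tendsto_id)
    filter_upwards [eventually_ge_atTop (0:ℝ)] with u hu
    rw [hRe2 u hu]
    have h7 := hRmnn u hu
    simp only [id_eq]
    linarith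
  · -- the tail integral diverges
    have hRmtend : Tendsto Rm atTop atTop := by
      rw [tendsto_atTop]
      intro Mv
      have htop : (∫⁻ y in Set.Ioi (0:ℝ), ENNReal.ofReal (Pib y)) = ⊤ := by
        by_contra hne
        apply hnInt
        refine ⟨hPm2, ?_⟩
        have h8 : (∫⁻ y in Set.Ioi (0:ℝ), (‖Pib y‖₊ : ENNReal)) < ⊤ := by
          have h9 : (∫⁻ y in Set.Ioi (0:ℝ), (‖Pib y‖₊ : ENNReal))
              = ∫⁻ y in Set.Ioi (0:ℝ), ENNReal.ofReal (Pib y) := by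
            apply lintegral_congr_ae
            filter_upwards [ae_restrict_mem measurableSet_Ioi] with y hy
            exact Real.enorm_eq_ofReal (hPib_nonneg y hy)
          rw [h9]
          exact lt_top_iff_ne_top.2 hne
        exact h8
      set μP : Measure ℝ := volume.withDensity (fun y => ENNReal.ofReal (Pib y)) with hμP
      have hμPtop : μP (Set.Ioi 0) = ⊤ := by
        rw [hμP, withDensity_apply _ measurableSet_Ioi]
        exact htop
      have hmono : Monotone (fun n : ℕ => Set.Ioc (1/(n+1) : ℝ) (n+1)) := by
        intro i j hij
        apply Set.Ioc_subset_Ioc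
        · apply one_div_le_one_div_of_le (by positivity)
          have : (i:ℝ) ≤ j := Nat.cast_le.2 hij
          linarith
        · have : (i:ℝ) ≤ j := Nat.cast_le.2 hij
          linarith
      have hunion : (⋃ n : ℕ, Set.Ioc (1/(n+1):ℝ) (n+1)) = Set.Ioi 0 := by
        ext y
        simp only [Set.mem_iUnion, Set.mem_Ioc, Set.mem_Ioi]
        constructor
        · rintro ⟨n, h1, h2⟩
          have : (0:ℝ) < 1/(n+1) := by positivity
          linarith
        · intro hy
          obtain ⟨n, hn⟩ := exists_nat_ge (max (1/y) y)
          refine ⟨n, ?_, ?_⟩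
          · have h1 : 1/y ≤ n := le_trans (le_max_left _ _) hn
            rw [div_lt_iff₀ (by positivity)]
            have h2 := (div_le_iff₀ hy).1 h1
            nlinarith
          · have h2 : y ≤ n := le_trans (le_max_right _ _) hn
            linarith
      have hcont := tendsto_measure_iUnion_atTop (μ := μP) hmono
      rw [hunion, hμPtop] at hcont
      have hev : ∀ᶠ n : ℕ in atTop,
          ENNReal.ofReal (2*|Mv|+1) < μP (Set.Ioc (1/(n+1):ℝ) (n+1)) := by
        have h10 : {x : ENNReal | ENNReal.ofReal (2*|Mv|+1) < x} ∈ nhds (⊤ : ENNReal) :=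
          lt_mem_nhds ENNReal.ofReal_lt_top
        exact hcont.eventually h10
      obtain ⟨n, hn⟩ := hev.exists
      set δ0 : ℝ := 1/(n+1) with hδ0
      set T0 : ℝ := ((n:ℝ)+1) with hT0
      have hδ0pos : 0 < δ0 := by rw [hδ0]; positivity
      have hPint : IntegrableOn Pib (Set.Ioc δ0 T0) := by
        apply Integrable.mono' (g := fun _ => Pib δ0)
          (integrableOn_const measure_Ioc_lt_top.ne)
          (hPm2.mono_measure (Measure.restrict_mono (fun y hy => lt_trans hδ0pos hy.1) le_rfl))
        filter_upwards [ae_restrict_mem measurableSet_Ioc] with y hy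
        rw [Real.norm_eq_abs, abs_of_nonneg (hPib_nonneg y (lt_trans hδ0pos hy.1))]
        exact hPib_anti δ0 y hδ0pos (le_of_lt hy.1)
      have hlfin : (∫⁻ y in Set.Ioc δ0 T0, ENNReal.ofReal (Pib y)) < ⊤ := by
        have h9 : (∫⁻ y in Set.Ioc δ0 T0, ENNReal.ofReal (Pib y))
            = ∫⁻ y in Set.Ioc δ0 T0, (‖Pib y‖₊ : ENNReal) := by
          apply lintegral_congr_ae
          filter_upwards [ae_restrict_mem measurableSet_Ioc] with y hy
          exact (Real.enorm_eq_ofReal (hPib_nonneg y (lt_trans hδ0pos hy.1))).symm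
        rw [h9]
        exact hPint.2
      have hPlow : 2*|Mv|+1 ≤ ∫ y in Set.Ioc δ0 T0, Pib y := by
        have h1 : ∫ y in Set.Ioc δ0 T0, Pib y
            = (∫⁻ y in Set.Ioc δ0 T0, ENNReal.ofReal (Pib y)).toReal := by
          rw [integral_eq_lintegral_of_nonneg_ae ?_ hPint.1]
          · filter_upwards [ae_restrict_mem measurableSet_Ioc] with y hy
            exact hPib_nonneg y (lt_trans hδ0pos hy.1)
        have h2 : μP (Set.Ioc δ0 T0) = ∫⁻ y in Set.Ioc δ0 T0, ENNReal.ofReal (Pib y) := by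
          rw [hμP]; exact withDensity_apply _ measurableSet_Ioc
        rw [h1]
        rw [show μP (Set.Ioc (1/(n+1):ℝ) (n+1)) = μP (Set.Ioc δ0 T0) from by rw [← hδ0, ← hT0],
          h2] at hn
        calc 2*|Mv|+1 = (ENNReal.ofReal (2*|Mv|+1)).toReal := by
              rw [ENNReal.toReal_ofReal (by positivity)]
          _ ≤ (∫⁻ y in Set.Ioc δ0 T0, ENNReal.ofReal (Pib y)).toReal :=
              ENNReal.toReal_mono hlfin.ne (le_of_lt hn)
      filter_upwards [eventually_ge_atTop (max 0 (Real.log 2 / δ0))] with u hu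
      have hu0 : 0 ≤ u := le_trans (le_max_left _ _) hu
      have hu2 : Real.log 2 / δ0 ≤ u := le_trans (le_max_right _ _) hu
      have hsub : (∫ y in Set.Ioc δ0 T0, (1 - Real.exp (-(u*y))) * Pib y) ≤ Rm u := by
        apply setIntegral_mono_set (hIntR2 u hu0) ?_ ?_
        · filter_upwards [ae_restrict_mem measurableSet_Ioi] with y hy
          have hy' : (0:ℝ) < y := hy
          exact mul_nonneg (aux_one_sub_exp_nonneg (by positivity)) (hPib_nonneg y hy')
        · exact HasSubset.Subset.eventuallyLE (fun y hy => lt_trans hδ0pos hy.1)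
      have hhalf : (∫ y in Set.Ioc δ0 T0, (1/2) * Pib y)
          ≤ ∫ y in Set.Ioc δ0 T0, (1 - Real.exp (-(u*y))) * Pib y := by
        apply setIntegral_mono_on (hPint.const_mul (1/2))
          ((hIntR2 u hu0).mono_set (fun y hy => lt_trans hδ0pos hy.1)) measurableSet_Ioc
        intro y hy
        have hp := hPib_nonneg y (lt_trans hδ0pos hy.1)
        have hexp : Real.exp (-(u*y)) ≤ 1/2 := by
          have h4 : Real.log 2 ≤ u*y := by
            calc Real.log 2 = (Real.log 2/δ0) * δ0 := by field_simp
              _ ≤ u * δ0 := mul_le_mul_of_nonneg_right hu2 hδ0pos.le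
              _ ≤ u * y := mul_le_mul_of_nonneg_left (le_of_lt hy.1) hu0
          have h5 : Real.exp (-(u*y)) ≤ Real.exp (-(Real.log 2)) :=
            Real.exp_le_exp.2 (by linarith)
          have hrl : Real.exp (-(Real.log 2)) = 2⁻¹ := by
            rw [Real.exp_neg, Real.exp_log (by norm_num : (0:ℝ) < 2)]
          rw [hrl] at h5
          rw [show (1:ℝ)/2 = 2⁻¹ by norm_num]
          exact h5
        nlinarith
      have h6 : (∫ y in Set.Ioc δ0 T0, (1/2) * Pib y)
          = (1/2) * ∫ y in Set.Ioc δ0 T0, Pib y := integral_const_mul _ _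
      calc Mv ≤ |Mv| := le_abs_self Mv
        _ ≤ (1/2) * (2*|Mv|+1) := by linarith [abs_nonneg Mv]
        _ ≤ (1/2) * ∫ y in Set.Ioc δ0 T0, Pib y := by linarith [hPlow]
        _ = ∫ y in Set.Ioc δ0 T0, (1/2) * Pib y := h6.symm
        _ ≤ ∫ y in Set.Ioc δ0 T0, (1 - Real.exp (-(u*y))) * Pib y := hhalf
        _ ≤ Rm u := hsub
    apply tendsto_atTop_mono' atTop ?_ hRmtend
    filter_upwards [eventually_ge_atTop (0:ℝ)] with u hu
    rw [hRe2 u hu]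
    have h7 : 0 ≤ σ2 * u := mul_nonneg hσ hu
    linarith
end

section
/- Let A > 0, u ≥ 0, and let η be a nonnegative Borel measure on (0,∞) with η((x,∞)) < ∞ for every x > 0 and ∫₀¹ y η(dy) < ∞. Let v : ℝ → ℝ satisfy: v(x) = v'(x) = v''(x) = 0 for x ≤ 0, v is twice continuously differentiable on (−∞, A], v(x) > 0 for x ∈ (0,A), and v is log-concave on (0,A). Assume that for every x ∈ (0,A): x v'(x) = −u v(x) − ∫₀^∞ ( v(x−y) − v(x) ) η(dy) and x v''(x) = −(u+1) v'(x) − ∫₀^∞ ( v'(x−y) − v'(x) ) η(dy), both integrals converging absolutely. Then the function y ↦ log v(e^{−y}) is concave on (−log A, ∞). (Paper: Lemma 'prop:technical', stated there with the nonincreasing function κ whose Stieltjes measure is −η.) -/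
open MeasureTheory

lemma concave_four {s : Set ℝ} {φ : ℝ → ℝ} (h : ConcaveOn ℝ s φ)
    {a m M d : ℝ} (ha : a ∈ s) (hd : d ∈ s)
    (ham : a ≤ m) (hmM : m ≤ M) (hMd : M ≤ d) (hsum : a + d = m + M) :
    φ a + φ d ≤ φ m + φ M := by
  rcases eq_or_lt_of_le (ham.trans (hmM.trans hMd)) with heq | had
  · have hma : m = a := le_antisymm (by linarith) ham
    have hMd' : M = d := by linarith
    rw [hma, hMd']
  · set lam := (d - m) / (d - a) with hlam
    have hda : 0 < d - a := by linarith
    have h0 : 0 ≤ lam := div_nonneg (by linarith) hda.le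
    have h1 : lam ≤ 1 := (div_le_one hda).2 (by linarith)
    have hm : lam * a + (1 - lam) * d = m := by
      have e : lam * (d - a) = d - m := by rw [hlam]; exact div_mul_cancel₀ _ hda.ne'
      linear_combination -e
    have hM : (1 - lam) * a + lam * d = M := by
      have : M = a + d - m := by linarith
      rw [this, ← hm]; ring
    have h2 := h.2 ha hd h0 (by linarith : (0:ℝ) ≤ 1 - lam) (by ring)
    have h3 := h.2 ha hd (by linarith : (0:ℝ) ≤ 1 - lam) h0 (by ring)
    simp only [smul_eq_mul] at h2 h3
    rw [hm] at h2
    rw [hM] at h3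
    linarith

lemma ratio_mono {A : ℝ} {v : ℝ → ℝ}
    (hv0 : ∀ x : ℝ, x ≤ 0 → v x = 0)
    (hvpos : ∀ x ∈ Set.Ioo (0:ℝ) A, 0 < v x)
    (hvlog : ConcaveOn ℝ (Set.Ioo 0 A) (fun x => Real.log (v x)))
    {x₁ x₂ t : ℝ} (hx2 : x₂ ∈ Set.Ioo (0:ℝ) A) (hx1 : x₁ ∈ Set.Ioo (0:ℝ) A)
    (h21 : x₂ ≤ x₁) (ht : 0 < t) :
    v (x₂ - t) / v x₂ ≤ v (x₁ - t) / v x₁ := by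
  obtain ⟨hx2p, hx2A⟩ := hx2
  obtain ⟨hx1p, hx1A⟩ := hx1
  have hv2 := hvpos x₂ ⟨hx2p, hx2A⟩
  have hv1 := hvpos x₁ ⟨hx1p, hx1A⟩
  rcases le_or_gt (x₁ - t) 0 with h1t | h1t
  · rw [hv0 _ h1t, hv0 _ (by linarith : x₂ - t ≤ 0)]; simp
  rcases le_or_gt (x₂ - t) 0 with h2t | h2t
  · rw [hv0 _ h2t]
    exact le_trans (by simp) (div_nonneg (hvpos _ ⟨h1t, by linarith⟩).le hv1.le)
  · have hv2t := hvpos (x₂ - t) ⟨h2t, by linarith⟩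
    have hv1t := hvpos (x₁ - t) ⟨h1t, by linarith⟩
    have key : Real.log (v (x₂ - t)) + Real.log (v x₁)
        ≤ Real.log (v (x₁ - t)) + Real.log (v x₂) := by
      rcases le_total (x₁ - t) x₂ with hc | hc
      · exact concave_four hvlog ⟨h2t, by linarith⟩ ⟨hx1p, hx1A⟩
          (by linarith) hc (by linarith) (by ring)
      · have := concave_four hvlog ⟨h2t, by linarith⟩ ⟨hx1p, hx1A⟩
          (by linarith) hc (by linarith) (by ring)
        linarith
    rw [div_le_div_iff₀ hv2 hv1]
    have : Real.log (v (x₂ - t) * v x₁) ≤ Real.log (v (x₁ - t) * v x₂) := by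
      rw [Real.log_mul hv2t.ne' hv1.ne', Real.log_mul hv1t.ne' hv2.ne']
      exact key
    exact (Real.log_le_log_iff (by positivity) (by positivity)).1 this

/-- the technical lemma transferring log-concavity of `v` on `(0,A)` to
log-concavity of `y ↦ v(e^{-y})` on `(-log A, ∞)`, for solutions of the two
integro-differential equations. -/
theorem log_concavity_transfer
    (A u : ℝ) (hA : 0 < A) (hu : 0 ≤ u)
    (η : Measure ℝ)
    (hη0 : η (Set.Iic 0) = 0)
    (hηfin : ∀ x : ℝ, 0 < x → η (Set.Ioi x) < ⊤)
    (hηint : IntegrableOn (fun y : ℝ => y) (Set.Ioc 0 1) η)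
    (v : ℝ → ℝ)
    (hv0 : ∀ x : ℝ, x ≤ 0 → v x = 0 ∧ deriv v x = 0 ∧ deriv (deriv v) x = 0)
    (hvC2 : ContDiffOn ℝ 2 v (Set.Iic A))
    (hvpos : ∀ x ∈ Set.Ioo (0:ℝ) A, 0 < v x)
    (hvlog : ConcaveOn ℝ (Set.Ioo 0 A) (fun x => Real.log (v x)))
    (hint1 : ∀ x ∈ Set.Ioo (0:ℝ) A, Integrable (fun y : ℝ => v (x - y) - v x) η)
    (hint2 : ∀ x ∈ Set.Ioo (0:ℝ) A,
      Integrable (fun y : ℝ => deriv v (x - y) - deriv v x) η)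
    (heq1 : ∀ x ∈ Set.Ioo (0:ℝ) A,
      x * deriv v x = -u * v x - ∫ y, (v (x - y) - v x) ∂η)
    (heq2 : ∀ x ∈ Set.Ioo (0:ℝ) A,
      x * deriv (deriv v) x = -(u + 1) * deriv v x - ∫ y, (deriv v (x - y) - deriv v x) ∂η) :
    ConcaveOn ℝ (Set.Ioi (-Real.log A)) (fun y => Real.log (v (Real.exp (-y)))) := by
  set f : ℝ → ℝ := fun y => Real.log (v (Real.exp (-y))) with hf
  have hmem : ∀ y ∈ Set.Ioi (-Real.log A), Real.exp (-y) ∈ Set.Ioo (0:ℝ) A := by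
    intro y hy
    refine ⟨Real.exp_pos _, ?_⟩
    have hy' : -y < Real.log A := by
      have : -Real.log A < y := hy
      linarith
    calc Real.exp (-y) < Real.exp (Real.log A) := Real.exp_lt_exp.2 hy'
      _ = A := Real.exp_log hA
  have hderiv : ∀ y ∈ Set.Ioi (-Real.log A),
      HasDerivAt f (u + (∫ t, (v (Real.exp (-y) - t) - v (Real.exp (-y))) ∂η)
        / v (Real.exp (-y))) y := by
    intro y hy
    set x := Real.exp (-y) with hx
    have hxm := hmem y hy
    have hvx := hvpos x hxm
    have hdx : HasDerivAt (fun y : ℝ => Real.exp (-y)) (-x) y := by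
      have h := (Real.hasDerivAt_exp (-y)).comp y ((hasDerivAt_id y).neg)
      exact h.congr_deriv (by simp [hx])
    have hdv : HasDerivAt v (deriv v x) x :=
      ((hvC2.contDiffAt (Iic_mem_nhds hxm.2)).differentiableAt two_ne_zero).hasDerivAt
    have hdlog : HasDerivAt Real.log (v x)⁻¹ (v x) := Real.hasDerivAt_log hvx.ne'
    have hcomp := (hdlog.comp x hdv).comp y hdx
    refine hcomp.congr_deriv ?_
    symm
    have he1 := heq1 x hxm
    field_simp
    nlinarith [he1]
  have hcont : ContinuousOn f (Set.Ioi (-Real.log A)) := fun y hy =>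
    ((hderiv y hy).continuousAt).continuousWithinAt
  have hdiff : DifferentiableOn ℝ f (interior (Set.Ioi (-Real.log A))) := by
    rw [interior_Ioi]
    exact fun y hy => ((hderiv y hy).differentiableAt).differentiableWithinAt
  refine AntitoneOn.concaveOn_of_deriv (convex_Ioi _) hcont hdiff ?_
  rw [interior_Ioi]
  intro y₁ hy₁ y₂ hy₂ h12
  rw [(hderiv y₁ hy₁).deriv, (hderiv y₂ hy₂).deriv]
  set x₁ := Real.exp (-y₁) with hx1d
  set x₂ := Real.exp (-y₂) with hx2d
  have hx1 := hmem y₁ hy₁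
  have hx2 := hmem y₂ hy₂
  have h21 : x₂ ≤ x₁ := Real.exp_le_exp.2 (by linarith)
  have hv1 := hvpos x₁ hx1
  have hv2 := hvpos x₂ hx2
  have e1 : (∫ t, (v (x₁ - t) - v x₁) ∂η) / v x₁
      = ∫ t, (v (x₁ - t) - v x₁) / v x₁ ∂η := (integral_div _ _).symm
  have e2 : (∫ t, (v (x₂ - t) - v x₂) ∂η) / v x₂
      = ∫ t, (v (x₂ - t) - v x₂) / v x₂ ∂η := (integral_div _ _).symm
  have hpos : ∀ᵐ t ∂η, 0 < t := by
    rw [ae_iff]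
    convert hη0 using 2
    ext t; simp [not_lt]
  have hmono : (∫ t, (v (x₂ - t) - v x₂) / v x₂ ∂η)
      ≤ ∫ t, (v (x₁ - t) - v x₁) / v x₁ ∂η := by
    refine integral_mono_ae ((hint1 x₂ hx2).div_const _) ((hint1 x₁ hx1).div_const _) ?_
    filter_upwards [hpos] with t ht
    have hr := ratio_mono (fun x hx => (hv0 x hx).1) hvpos hvlog hx2 hx1 h21 ht
    rw [sub_div, sub_div, div_self hv2.ne', div_self hv1.ne']
    linarith
  rw [e1, e2]
  linarith
end

section
/- Let Θ ∈ (0, π/2], let C(Θ) = { z ∈ ℂ \ {0} : |arg z| < Θ } and let ν : C(Θ) → ℂ be holomorphic. For y > 0 and n ∈ ℕ set w_n(y) = (1/n!) · (d/dx)^n [ x^n ν(x) ] evaluated at x = y. Then: (i) for every y > 0 and every z ∈ ℂ with |z| < sin Θ, the power series ∑_{n=0}^∞ w_n(y) z^n converges and its sum equals (1/(1−z)) ν( y/(1−z) ); (ii) for every y > 0 and every t > −log sin Θ there exists F = F(y,t) > 0 such that |w_n(y)| ≤ F e^{t n} for all n ≥ 1. (Paper: Proposition 'prop:preliminAnal',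 item 1, generalizing the generating function of the Laguerre polynomials.) -/
set_option maxHeartbeats 1000000

open MeasureTheory

section SectorAux

open Complex Finset

/-- Uniqueness helper: a power series representation on a ball gives a `HasFPowerSeriesAt`. -/
lemma hasFPowerSeriesAt_of_hasSum {a : ℕ → ℂ} {f : ℂ → ℂ} {r : ℝ} (hr : 0 < r)
    (h : ∀ z : ℂ, ‖z‖ < r → HasSum (fun n => a n * z ^ n) (f z)) :
    HasFPowerSeriesAt f (FormalMultilinearSeries.ofScalars ℂ a) 0 := by
  refine ⟨(Real.toNNReal (r / 2) : ENNReal), ⟨?_, ?_, ?_⟩⟩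
  · apply FormalMultilinearSeries.le_radius_of_tendsto _ (l := 0)
    have hsum := (h ((r / 2 : ℝ) : ℂ)
      (by rw [Complex.norm_real, Real.norm_eq_abs,
        _root_.abs_of_nonneg (by linarith : (0:ℝ) ≤ r/2)]; linarith)).summable
    have h0 := hsum.tendsto_atTop_zero.norm
    rw [norm_zero] at h0
    convert h0 using 2 with n
    rw [norm_mul, norm_pow, Complex.norm_real, Real.norm_eq_abs,
      _root_.abs_of_nonneg (by linarith : (0:ℝ) ≤ r/2),
      FormalMultilinearSeries.ofScalars_norm, Real.coe_toNNReal _ (by linarith : (0:ℝ) ≤ r/2)]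
  · simp only [ENNReal.coe_pos]
    rw [← Real.toNNReal_zero, Real.toNNReal_lt_toNNReal_iff (by linarith)]
    linarith
  · intro w hw
    rw [Metric.emetric_ball_nnreal, Metric.mem_ball, dist_zero_right,
      Real.coe_toNNReal _ (by linarith : (0:ℝ) ≤ r/2)] at hw
    have := h w (by linarith)
    simp only [FormalMultilinearSeries.ofScalars_apply_eq, smul_eq_mul, zero_add]
    exact this

lemma coeff_unique {a c : ℕ → ℂ} {f : ℂ → ℂ} {r₁ r₂ : ℝ} (h1 : 0 < r₁) (h2 : 0 < r₂)
    (ha : ∀ z : ℂ, ‖z‖ < r₁ → HasSum (fun n => a n * z ^ n) (f z))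
    (hc : ∀ z : ℂ, ‖z‖ < r₂ → HasSum (fun n => c n * z ^ n) (f z)) : a = c := by
  have := (hasFPowerSeriesAt_of_hasSum h1 ha).eq_formalMultilinearSeries
    (hasFPowerSeriesAt_of_hasSum h2 hc)
  exact FormalMultilinearSeries.ofScalars_series_injective ℂ ℂ this

/-- Negative binomial series. -/
lemma negbin {z : ℂ} (hz : ‖z‖ < 1 / 2) (k : ℕ) :
    HasSum (fun m : ℕ => (((k + m).choose k : ℕ) : ℂ) * z ^ m) (((1 - z)⁻¹) ^ (k + 1)) := by
  have hz1 : ‖z‖ < 1 := by linarith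
  have h1z : (1 : ℂ) - z ≠ 0 := by
    intro h
    have hz1' : z = 1 := by linear_combination -h
    rw [hz1'] at hz1; simp at hz1
  induction k with
  | zero =>
    simpa using hasSum_geometric_of_norm_lt_one hz1
  | succ k ih =>
    have hchb : ∀ n j : ℕ, ((n.choose j : ℕ) : ℝ) ≤ 2 ^ n := by
      intro n j
      have h1 : n.choose j ≤ 2 ^ n := by
        rcases le_or_gt j n with hj | hj
        · calc n.choose j ≤ ∑ i ∈ Finset.range (n + 1), n.choose i :=
              Finset.single_le_sum (fun i _ => Nat.zero_le _)
                (Finset.mem_range.mpr (by omega))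
          _ = 2 ^ n := Nat.sum_range_choose n
        · rw [Nat.choose_eq_zero_of_lt hj]; positivity
      exact_mod_cast h1
    have hsummable : Summable (fun m : ℕ => (((k + 1 + m).choose (k + 1) : ℕ) : ℂ) * z ^ m) := by
      apply Summable.of_norm
      apply Summable.of_nonneg_of_le (fun m => norm_nonneg _) (fun m => ?_)
        (((summable_geometric_of_lt_one (by positivity) (by linarith : 2 * ‖z‖ < 1))).mul_left
          ((2 : ℝ) ^ (k + 1)))
      rw [norm_mul, norm_pow, Complex.norm_natCast]
      calc (((k + 1 + m).choose (k + 1) : ℕ) : ℝ) * ‖z‖ ^ m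
          ≤ 2 ^ (k + 1 + m) * ‖z‖ ^ m := by
            have := hchb (k + 1 + m) (k + 1)
            have h2 : (0:ℝ) ≤ ‖z‖ ^ m := by positivity
            nlinarith
        _ = 2 ^ (k + 1) * (2 * ‖z‖) ^ m := by rw [mul_pow, pow_add]; ring
    set T := ∑' m : ℕ, (((k + 1 + m).choose (k + 1) : ℕ) : ℂ) * z ^ m with hT
    have hTsum : HasSum (fun m : ℕ => (((k + 1 + m).choose (k + 1) : ℕ) : ℂ) * z ^ m) T :=
      hsummable.hasSum
    have hshift : HasSum (fun m : ℕ => (((k + 1 + (m + 1)).choose (k + 1) : ℕ) : ℂ) * z ^ (m + 1))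
        (T - 1) := by
      apply (hasSum_nat_add_iff (f := fun m : ℕ => (((k + 1 + m).choose (k + 1) : ℕ) : ℂ) * z ^ m)
        1).mpr
      rw [Finset.range_one, Finset.sum_singleton]
      simpa [Nat.choose_self] using hTsum
    have hishift : HasSum (fun m : ℕ => (((k + (m + 1)).choose k : ℕ) : ℂ) * z ^ (m + 1))
        ((((1 : ℂ) - z)⁻¹) ^ (k + 1) - 1) := by
      apply (hasSum_nat_add_iff (f := fun m : ℕ => (((k + m).choose k : ℕ) : ℂ) * z ^ m) 1).mpr
      rw [Finset.range_one, Finset.sum_singleton]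
      simpa [Nat.choose_self] using ih
    have hcomb := hishift.add (hTsum.mul_left z)
    have heq : (fun m : ℕ => ((((k + (m + 1)).choose k : ℕ) : ℂ) * z ^ (m + 1)) +
        z * ((((k + 1 + m).choose (k + 1) : ℕ) : ℂ) * z ^ m)) =
        fun m : ℕ => (((k + 1 + (m + 1)).choose (k + 1) : ℕ) : ℂ) * z ^ (m + 1) := by
      funext m
      have hpascal : (k + 1 + (m + 1)).choose (k + 1) =
          (k + (m + 1)).choose k + (k + 1 + m).choose (k + 1) := by
        rw [show k + (m + 1) = k + m + 1 from by omega,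
          show k + 1 + m = k + m + 1 from by omega,
          show k + 1 + (m + 1) = (k + m + 1) + 1 from by omega]
        exact Nat.choose_succ_succ' (k + m + 1) k
      rw [hpascal]
      push_cast
      ring
    rw [heq] at hcomb
    have hkey := hshift.unique hcomb
    have hTval : T = (((1 : ℂ) - z)⁻¹) ^ (k + 1 + 1) := by
      have h2 : (((1 : ℂ) - z)⁻¹) ^ (k + 1) = T * (1 - z) := by linear_combination -hkey
      rw [pow_succ, h2]
      field_simp
    rw [← hTval]
    exact hTsum

/-- auxiliary inequality -/
lemma key2_aux {y a b s c : ℝ} (ha : 0 < a) (hs0 : 0 < s) (hc : 0 < c)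
    (hsc : s ^ 2 + c ^ 2 = 1) (key : (a - y) ^ 2 + b ^ 2 < (y * s) ^ 2) : |b| * c < a * s := by
  have hP : 0 < c ^ 2 * ((y * s) ^ 2 - ((a - y) ^ 2 + b ^ 2)) :=
    mul_pos (pow_pos hc 2) (by linarith)
  have hx : (s ^ 2 + c ^ 2 - 1) * (a ^ 2 - c ^ 2 * y ^ 2) = 0 := by
    rw [show s ^ 2 + c ^ 2 - 1 = 0 from by linarith, zero_mul]
  have h2' : (b * c) ^ 2 < (a * s) ^ 2 := by nlinarith [hP, hx, sq_nonneg (a - c ^ 2 * y)]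
  have hq : (|b| * c) ^ 2 = (b * c) ^ 2 := by rw [mul_pow, mul_pow, _root_.sq_abs]
  nlinarith [h2', hq, mul_pos ha hs0, mul_nonneg (abs_nonneg b) hc.le]

/-- Key geometric fact: the open ball of radius `y sin Θ` around `y > 0` lies in the sector. -/
lemma sector_mem {Θ : ℝ} (hΘ0 : 0 < Θ) (hΘ : Θ ≤ Real.pi / 2) {y : ℝ} (hy : 0 < y) {w : ℂ}
    (hw : ‖w - (y : ℂ)‖ < y * Real.sin Θ) : 0 < w.re ∧ w ≠ 0 ∧ |w.arg| < Θ := by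
  have hπ := Real.pi_pos
  set s := Real.sin Θ with hsdef
  have hs0 : 0 < s := Real.sin_pos_of_pos_of_lt_pi hΘ0 (by linarith)
  have hs1 : s ≤ 1 := Real.sin_le_one Θ
  have hc0 : 0 ≤ Real.cos Θ := Real.cos_nonneg_of_mem_Icc ⟨by linarith, hΘ⟩
  have hsc : s ^ 2 + Real.cos Θ ^ 2 = 1 := Real.sin_sq_add_cos_sq Θ
  set a := w.re with hadef
  set b := w.im with hbdef
  have hnorm : ‖w - (y : ℂ)‖ ^ 2 = (a - y) ^ 2 + b ^ 2 := by
    rw [show ‖w - (y:ℂ)‖ ^ 2 = Complex.normSq (w - (y:ℂ)) from by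
      rw [Complex.sq_norm], Complex.normSq_apply]
    simp only [Complex.sub_re, Complex.ofReal_re, Complex.sub_im, Complex.ofReal_im,
      ← hadef, ← hbdef]
    ring
  have key : (a - y) ^ 2 + b ^ 2 < (y * s) ^ 2 := by
    nlinarith [norm_nonneg (w - (y : ℂ)), hw, hnorm]
  have ha : 0 < a := by nlinarith [sq_nonneg b, sq_nonneg a, mul_pos hy hy]
  have hw0 : w ≠ 0 := by
    intro h
    rw [h] at hadef
    simp at hadef
    rw [hadef] at ha
    exact lt_irrefl 0 ha
  refine ⟨ha, hw0, ?_⟩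
  have hhalf : |w.arg| < Real.pi / 2 := Complex.abs_arg_lt_pi_div_two_iff.mpr (Or.inl ha)
  have harg : w.arg = Real.arctan (b / a) := by
    obtain ⟨hl, hr⟩ := abs_lt.mp hhalf
    rw [← Complex.tan_arg]
    exact (Real.arctan_tan (by linarith) (by linarith)).symm
  rcases eq_or_lt_of_le hΘ with hE | hlt
  · rw [hE]; exact hhalf
  · have hcpos : 0 < Real.cos Θ := Real.cos_pos_of_mem_Ioo ⟨by linarith, hlt⟩
    have key2 : |b| * Real.cos Θ < a * s := key2_aux ha hs0 hcpos hsc key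
    rw [harg]
    have habs : |Real.arctan (b / a)| = Real.arctan (|b| / a) := by
      rcases le_or_gt 0 b with hb | hb
      · rw [_root_.abs_of_nonneg hb, _root_.abs_of_nonneg]
        rw [← Real.arctan_zero]
        exact Real.arctan_strictMono.monotone (by positivity)
      · rw [_root_.abs_of_neg hb, _root_.abs_of_neg, ← Real.arctan_neg, neg_div]
        have : b / a < 0 := div_neg_of_neg_of_pos hb ha
        calc Real.arctan (b / a) < Real.arctan 0 := Real.arctan_strictMono this
          _ = 0 := Real.arctan_zero
    rw [habs]
    have hlt2 : |b| / a < Real.tan Θ := by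
      rw [Real.tan_eq_sin_div_cos, div_lt_div_iff₀ ha hcpos]
      linarith [key2]
    calc Real.arctan (|b| / a) < Real.arctan (Real.tan Θ) := Real.arctan_strictMono hlt2
      _ = Θ := Real.arctan_tan (by linarith) hlt

/-- The sector is open. -/
lemma isOpen_sector {Θ : ℝ} (hΘ : Θ ≤ Real.pi / 2) :
    IsOpen {z : ℂ | z ≠ 0 ∧ |Complex.arg z| < Θ} := by
  rw [isOpen_iff_mem_nhds]
  rintro z ⟨hz0, hzarg⟩
  have hre : 0 < z.re := by
    have h := Complex.abs_arg_lt_pi_div_two_iff.mp (lt_of_lt_of_le hzarg hΘ)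
    tauto
  have hc : ContinuousAt Complex.arg z := Complex.continuousAt_arg (Or.inl hre)
  have h1 : Complex.arg ⁻¹' Set.Ioo (-Θ) Θ ∈ nhds z := by
    apply hc.preimage_mem_nhds
    exact Ioo_mem_nhds (by obtain ⟨hl, _⟩ := abs_lt.mp hzarg; exact hl)
      (by obtain ⟨_, hr⟩ := abs_lt.mp hzarg; exact hr)
  have h2 : {w : ℂ | w ≠ 0} ∈ nhds z := IsOpen.mem_nhds isOpen_ne hz0
  filter_upwards [h1, h2] with w hw1 hw2
  exact ⟨hw2, abs_lt.mpr ⟨hw1.1, hw1.2⟩⟩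

end SectorAux

/-- The coefficients `w_n(y) = (1/n!) (d/dx)^n [xⁿ ν(x)] |_{x=y}`. -/
noncomputable def wcoef (ν : ℂ → ℂ) (n : ℕ) (y : ℝ) : ℂ :=
  (1 / (n.factorial : ℂ)) * iteratedDeriv n (fun x : ℂ => x ^ n * ν x) (y : ℂ)

/-- generating function and exponential bounds for the coefficients `w_n`
associated to a function `ν` holomorphic in the sector `|arg z| < Θ`. -/
theorem sector_analytic_generating_function
    (Θ : ℝ) (hΘ0 : 0 < Θ) (hΘ : Θ ≤ Real.pi / 2)
    (ν : ℂ → ℂ)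
    (hν : DifferentiableOn ℂ ν {z : ℂ | z ≠ 0 ∧ |Complex.arg z| < Θ}) :
    (∀ y : ℝ, 0 < y → ∀ z : ℂ, ‖z‖ < Real.sin Θ →
      HasSum (fun n : ℕ => wcoef ν n y * z ^ n) ((1 / (1 - z)) * ν ((y : ℂ) / (1 - z))))
    ∧ (∀ y : ℝ, 0 < y → ∀ t : ℝ, -Real.log (Real.sin Θ) < t →
        ∃ F : ℝ, 0 < F ∧ ∀ n : ℕ, 1 ≤ n →
          ‖wcoef ν n y‖ ≤ F * Real.exp (t * n)) := by
  have hπ := Real.pi_pos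
  set s := Real.sin Θ with hsdef
  have hs0 : 0 < s := Real.sin_pos_of_pos_of_lt_pi hΘ0 (by linarith)
  have hs1 : s ≤ 1 := Real.sin_le_one Θ
  have hopen : IsOpen {z : ℂ | z ≠ 0 ∧ |Complex.arg z| < Θ} := isOpen_sector hΘ
  have main : ∀ y : ℝ, 0 < y → ∀ z : ℂ, ‖z‖ < s →
      HasSum (fun n : ℕ => wcoef ν n y * z ^ n) ((1 / (1 - z)) * ν ((y : ℂ) / (1 - z))) := by
    intro y hy
    set b : ℕ → ℂ := fun k => ((k.factorial : ℂ))⁻¹ * iteratedDeriv k ν (y : ℂ) with hbdef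
    have hys : (0:ℝ) < y * s := mul_pos hy hs0
    have hball : Metric.ball ((y : ℂ)) (y * s) ⊆ {z : ℂ | z ≠ 0 ∧ |Complex.arg z| < Θ} := by
      intro w hw
      rw [Metric.mem_ball, dist_eq_norm] at hw
      obtain ⟨_, h2, h3⟩ := sector_mem hΘ0 hΘ hy hw
      exact ⟨h2, h3⟩
    have hνball : DifferentiableOn ℂ ν (Metric.ball ((y : ℂ)) (y * s)) := hν.mono hball
    have hTaylor : ∀ u : ℂ, ‖u - (y : ℂ)‖ < y * s → HasSum (fun k => b k * (u - (y:ℂ)) ^ k) (ν u) := by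
      intro u hu
      have h := Complex.hasSum_taylorSeries_on_ball hνball
        (by rw [Metric.mem_ball, dist_eq_norm]; exact hu)
      have heq : (fun k => b k * (u - (y:ℂ)) ^ k) =
          fun k : ℕ => (k.factorial : ℂ)⁻¹ • (u - (y:ℂ)) ^ k • iteratedDeriv k ν (y:ℂ) := by
        funext k
        rw [smul_eq_mul, smul_eq_mul, hbdef]
        ring
      rw [heq]
      exact h
    -- coefficient bound
    have hcoefbd : ∃ C : ℝ, 0 ≤ C ∧ ∀ k : ℕ, ‖b k‖ * (3 * (y * s) / 4) ^ k ≤ C := by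
      have hmem : ‖((y : ℂ) + ((3 * (y * s) / 4 : ℝ) : ℂ)) - (y : ℂ)‖ < y * s := by
        rw [add_sub_cancel_left, Complex.norm_real, Real.norm_eq_abs,
          _root_.abs_of_nonneg (by linarith : (0:ℝ) ≤ 3 * (y * s) / 4)]
        linarith
      have hT := (hTaylor _ hmem).summable
      have htend := hT.tendsto_atTop_zero.norm
      rw [norm_zero] at htend
      obtain ⟨C, hCub⟩ := htend.bddAbove_range
      refine ⟨C, le_trans (norm_nonneg _) (hCub (Set.mem_range_self 0)), fun k => ?_⟩
      have hb := hCub (Set.mem_range_self k)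
      rw [norm_mul, norm_pow, add_sub_cancel_left, Complex.norm_real, Real.norm_eq_abs,
        _root_.abs_of_nonneg (by linarith : (0:ℝ) ≤ 3 * (y * s) / 4)] at hb
      exact hb
    obtain ⟨C, hC0, hC⟩ := hcoefbd
    -- sector facts for 1 - z
    have hzfacts : ∀ z : ℂ, ‖z‖ < s → ((1 : ℂ) - z ≠ 0 ∧ (y : ℂ) / (1 - z) ≠ 0 ∧
        |Complex.arg ((y : ℂ) / (1 - z))| < Θ) := by
      intro z hz
      have h1 : ‖((1:ℂ) - z) - ((1 : ℝ) : ℂ)‖ < 1 * Real.sin Θ := by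
        rw [Complex.ofReal_one, one_mul]
        simpa using hz
      obtain ⟨hre, hne, harg⟩ := sector_mem hΘ0 hΘ one_pos h1
      refine ⟨hne, div_ne_zero (by exact_mod_cast hy.ne') hne, ?_⟩
      have hrw : (y : ℂ) / (1 - z) = ((y : ℝ) : ℂ) * ((1:ℂ) - z)⁻¹ := by
        rw [div_eq_mul_inv]
      rw [hrw, Complex.arg_real_mul _ hy, Complex.arg_inv]
      rw [if_neg, abs_neg]
      · exact harg
      · intro hpi
        rw [hpi] at harg
        rw [_root_.abs_of_nonneg Real.pi_pos.le] at harg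
        linarith
    -- h and its differentiability on the ball of radius s
    set h : ℂ → ℂ := fun z => (1 / (1 - z)) * ν ((y : ℂ) / (1 - z)) with hhdef
    have hhdiff : DifferentiableOn ℂ h (Metric.ball 0 s) := by
      intro z hz
      rw [Metric.mem_ball, dist_zero_right] at hz
      obtain ⟨h1, h2, h3⟩ := hzfacts z hz
      apply DifferentiableAt.differentiableWithinAt
      have hin : DifferentiableAt ℂ (fun z : ℂ => (1:ℂ) - z) z :=
        (differentiable_const (1:ℂ)).differentiableAt.sub differentiable_id.differentiableAt
      apply DifferentiableAt.mul
      · exact (differentiable_const (1:ℂ)).differentiableAt.div hin h1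
      · have hmem : {w : ℂ | w ≠ 0 ∧ |Complex.arg w| < Θ} ∈ nhds ((y : ℂ) / (1 - z)) :=
          hopen.mem_nhds ⟨h2, h3⟩
        have hν' : DifferentiableAt ℂ ν ((y : ℂ) / (1 - z)) := hν.differentiableAt hmem
        exact hν'.comp z ((differentiable_const ((y:ℂ))).differentiableAt.div hin h1)
    -- Taylor coefficients of h
    set c : ℕ → ℂ := fun n => ((n.factorial : ℂ))⁻¹ * iteratedDeriv n h 0 with hcdef
    have hTh : ∀ z : ℂ, ‖z‖ < s → HasSum (fun n => c n * z ^ n) (h z) := by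
      intro z hz
      have hh := Complex.hasSum_taylorSeries_on_ball hhdiff
        (show z ∈ Metric.ball (0:ℂ) s by rw [Metric.mem_ball, dist_zero_right]; exact hz)
      have heq : (fun n => c n * z ^ n) =
          fun n : ℕ => (n.factorial : ℂ)⁻¹ • (z - 0) ^ n • iteratedDeriv n h 0 := by
        funext n
        rw [smul_eq_mul, smul_eq_mul, hcdef, sub_zero]
        ring
      rw [heq]
      exact hh
    set A : ℕ → ℂ := fun n => ∑ k ∈ Finset.range (n + 1), (n.choose k : ℂ) * (y : ℂ) ^ k * b k
      with hAdef
    -- explicit series on a small ball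
    have hsmall : ∀ z : ℂ, ‖z‖ < s / 8 → HasSum (fun n => A n * z ^ n) (h z) := by
      intro z hz
      have ht18 : ‖z‖ < 1 / 8 := lt_of_lt_of_le hz (by linarith)
      have ht0 : (0:ℝ) ≤ ‖z‖ := norm_nonneg z
      have h1z : (1 : ℂ) - z ≠ 0 := by
        intro hzero
        have : z = 1 := by linear_combination -hzero
        rw [this] at ht18
        simp at ht18
        linarith
      have h1zpos : 0 < ‖(1:ℂ) - z‖ := norm_pos_iff.mpr h1z
      have h1zlb : 1 - ‖z‖ ≤ ‖(1:ℂ) - z‖ := by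
        have := norm_sub_norm_le (1:ℂ) z
        simpa using this
      -- the point u = y/(1-z) is in the Taylor ball
      have hu : ‖(y : ℂ) / (1 - z) - (y : ℂ)‖ < y * s := by
        have he : (y : ℂ) / (1 - z) - (y : ℂ) = (y : ℂ) * z / (1 - z) := by
          field_simp
          ring
        rw [he, norm_div, norm_mul, Complex.norm_real, Real.norm_eq_abs,
          _root_.abs_of_nonneg hy.le, div_lt_iff₀ h1zpos]
        nlinarith [mul_pos hy hs0, hz, h1zlb, ht18, hy]
      have hTu := hTaylor ((y : ℂ) / (1 - z)) hu
      have he2 : (y : ℂ) / (1 - z) - (y : ℂ) = (y : ℂ) * z * ((1:ℂ) - z)⁻¹ := by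
        rw [← div_eq_mul_inv]
        field_simp
        ring
      rw [he2] at hTu
      -- outer sum
      have hOuter : HasSum (fun k => b k * (y : ℂ) ^ k * z ^ k * (((1:ℂ) - z)⁻¹) ^ (k + 1))
          (h z) := by
        have hmul := hTu.mul_left (1 / (1 - z))
        have heq : (fun k => b k * (y : ℂ) ^ k * z ^ k * (((1:ℂ) - z)⁻¹) ^ (k + 1)) =
            fun k => (1 / (1 - z)) * (b k * ((y : ℂ) * z * ((1:ℂ) - z)⁻¹) ^ k) := by
          funext k
          rw [mul_pow, mul_pow, pow_succ]
          ring
        rw [heq]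
        exact hmul
      -- rows
      have hRow : ∀ k : ℕ, HasSum
          (fun m : ℕ => b k * (y : ℂ) ^ k * (((k + m).choose k : ℕ) : ℂ) * z ^ (k + m))
          (b k * (y : ℂ) ^ k * z ^ k * (((1:ℂ) - z)⁻¹) ^ (k + 1)) := by
        intro k
        have hnb := (negbin (by linarith : ‖z‖ < 1/2) k).mul_left (b k * (y : ℂ) ^ k * z ^ k)
        have heq : (fun m : ℕ => b k * (y : ℂ) ^ k * (((k + m).choose k : ℕ) : ℂ) * z ^ (k + m)) =
            fun m : ℕ => b k * (y : ℂ) ^ k * z ^ k * ((((k + m).choose k : ℕ) : ℂ) * z ^ m) := by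
          funext m
          rw [pow_add]
          ring
        rw [heq]
        exact hnb
      -- summability of the double family
      set G : ℕ × ℕ → ℂ :=
        fun p => b p.1 * (y : ℂ) ^ p.1 * (((p.1 + p.2).choose p.1 : ℕ) : ℂ) * z ^ (p.1 + p.2)
        with hGdef
      have hGnorm : ∀ k m : ℕ, ‖G (k, m)‖ ≤
          (‖b k‖ * (y * (2 * ‖z‖)) ^ k) * (2 * ‖z‖) ^ m := by
        intro k m
        have hch : (((k + m).choose k : ℕ) : ℝ) ≤ 2 ^ (k + m) := by
          have h1 : (k + m).choose k ≤ 2 ^ (k + m) := by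
            calc (k + m).choose k ≤ ∑ i ∈ Finset.range (k + m + 1), (k + m).choose i :=
                Finset.single_le_sum (fun i _ => Nat.zero_le _)
                  (Finset.mem_range.mpr (by omega))
            _ = 2 ^ (k + m) := Nat.sum_range_choose _
          exact_mod_cast h1
        have : ‖G (k, m)‖ = ‖b k‖ * y ^ k * (((k + m).choose k : ℕ) : ℝ) * ‖z‖ ^ (k + m) := by
          rw [hGdef]
          simp only [norm_mul, norm_pow, Complex.norm_natCast, Complex.norm_real,
            Real.norm_eq_abs, _root_.abs_of_nonneg hy.le]
        rw [this]
        have hb0 : (0:ℝ) ≤ ‖b k‖ := norm_nonneg _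
        have hzp : (0:ℝ) ≤ ‖z‖ ^ (k + m) := by positivity
        calc ‖b k‖ * y ^ k * (((k + m).choose k : ℕ) : ℝ) * ‖z‖ ^ (k + m)
            ≤ ‖b k‖ * y ^ k * (2 ^ (k + m)) * ‖z‖ ^ (k + m) := by
              apply mul_le_mul_of_nonneg_right _ hzp
              apply mul_le_mul_of_nonneg_left hch (by positivity)
          _ = (‖b k‖ * (y * (2 * ‖z‖)) ^ k) * (2 * ‖z‖) ^ m := by
              rw [pow_add, mul_pow, mul_pow, mul_pow]
              ring
      have h2z1 : 2 * ‖z‖ < 1 := by linarith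
      have h2z0 : (0:ℝ) ≤ 2 * ‖z‖ := by linarith
      have hgeo : Summable (fun m : ℕ => (2 * ‖z‖) ^ m) := summable_geometric_of_lt_one h2z0 h2z1
      have hrow_summ : ∀ k : ℕ, Summable (fun m : ℕ => ‖G (k, m)‖) := by
        intro k
        apply Summable.of_nonneg_of_le (fun m => norm_nonneg _) (fun m => hGnorm k m)
        exact hgeo.mul_left _
      -- bound on row sums
      have hM : ∀ k : ℕ, ‖b k‖ * (y * (2 * ‖z‖)) ^ k ≤ C * (1/3) ^ k := by
        intro k
        have hq : y * (2 * ‖z‖) ≤ (3 * (y * s) / 4) * (1/3) := by nlinarith [hz, hy, hs0]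
        have h34 : (0:ℝ) ≤ 3 * (y * s) / 4 := by positivity
        have hyz0 : (0:ℝ) ≤ y * (2 * ‖z‖) := by positivity
        calc ‖b k‖ * (y * (2 * ‖z‖)) ^ k
            ≤ ‖b k‖ * ((3 * (y * s) / 4) * (1/3)) ^ k := by
              apply mul_le_mul_of_nonneg_left _ (norm_nonneg _)
              exact pow_le_pow_left₀ hyz0 hq k
          _ = (‖b k‖ * (3 * (y * s) / 4) ^ k) * (1/3) ^ k := by rw [mul_pow]; ring
          _ ≤ C * (1/3) ^ k := by
              apply mul_le_mul_of_nonneg_right (hC k) (by positivity)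
      have hGsumm : Summable (fun p : ℕ × ℕ => ‖G p‖) := by
        rw [summable_prod_of_nonneg (fun p => norm_nonneg _)]
        refine ⟨hrow_summ, ?_⟩
        apply Summable.of_nonneg_of_le
          (fun k => tsum_nonneg (fun m => norm_nonneg _))
          (fun k => ?_)
          ((((summable_geometric_of_lt_one (by norm_num) (by norm_num : (1:ℝ)/3 < 1)).mul_left
            C).mul_right ((1 - 2 * ‖z‖)⁻¹)))
        calc (∑' m, ‖G (k, m)‖)
            ≤ ∑' m : ℕ, (‖b k‖ * (y * (2 * ‖z‖)) ^ k) * (2 * ‖z‖) ^ m :=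
              Summable.tsum_le_tsum (hGnorm k) (hrow_summ k) (hgeo.mul_left _)
          _ = (‖b k‖ * (y * (2 * ‖z‖)) ^ k) * (1 - 2 * ‖z‖)⁻¹ := by
              rw [tsum_mul_left, tsum_geometric_of_lt_one h2z0 h2z1]
          _ ≤ C * (1/3) ^ k * (1 - 2 * ‖z‖)⁻¹ := by
              exact mul_le_mul_of_nonneg_right (hM k) (inv_nonneg.mpr (by linarith))
      have hGsum : Summable G := Summable.of_norm hGsumm
      have hGhas : HasSum G (∑' p, G p) := hGsum.hasSum
      have hfib : HasSum (fun k => b k * (y : ℂ) ^ k * z ^ k * (((1:ℂ) - z)⁻¹) ^ (k + 1))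
          (∑' p, G p) := hGhas.prod_fiberwise (fun k => hRow k)
      have hsum_eq : (∑' p, G p) = h z := hfib.unique hOuter
      rw [hsum_eq] at hGhas
      -- regroup along antidiagonals
      have hsig : HasSum (fun x : (Σ n : ℕ, Finset.HasAntidiagonal.antidiagonal n) => G x.2) (h z) :=
        (Finset.HasAntidiagonal.sigmaAntidiagonalEquivProd.hasSum_iff).mpr hGhas
      have hdiag : HasSum (fun n : ℕ => ∑ p ∈ Finset.HasAntidiagonal.antidiagonal n, G p) (h z) := by
        refine hsig.sigma (fun n => ?_)
        have := hasSum_fintype (fun p : Finset.HasAntidiagonal.antidiagonal n => G p.1)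
        convert this using 1
        exact (Finset.sum_coe_sort (Finset.HasAntidiagonal.antidiagonal n) G).symm
      have hfinal : ∀ n : ℕ, ∑ p ∈ Finset.HasAntidiagonal.antidiagonal n, G p = A n * z ^ n := by
        intro n
        rw [Finset.Nat.sum_antidiagonal_eq_sum_range_succ_mk, hAdef, Finset.sum_mul]
        apply Finset.sum_congr rfl
        intro k hk
        have hkn : k ≤ n := Nat.lt_succ_iff.mp (Finset.mem_range.mp hk)
        have hsum : k + (n - k) = n := by omega
        rw [hGdef]
        simp only
        rw [hsum]
        ring
      have heq2 : (fun n : ℕ => ∑ p ∈ Finset.HasAntidiagonal.antidiagonal n, G p) =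
          fun n : ℕ => A n * z ^ n := funext hfinal
      rw [heq2] at hdiag
      exact hdiag
    have hAc : A = c := coeff_unique (by linarith) hs0 hsmall hTh
    -- identification of wcoef with A
    have hwA : ∀ n : ℕ, wcoef ν n y = A n := by
      intro n
      set f : ℂ → ℂ := fun x => x ^ n * ν x with hfdef
      have hfd : DifferentiableOn ℂ f (Metric.ball ((y : ℂ)) (y * s)) :=
        (differentiable_pow n).differentiableOn.mul hνball
      have hT1 : ∀ w : ℂ, ‖w‖ < y * s → HasSum
          (fun k => ((k.factorial : ℂ)⁻¹ * iteratedDeriv k f (y : ℂ)) * w ^ k)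
          (f ((y : ℂ) + w)) := by
        intro w hw
        have hmem : (y : ℂ) + w ∈ Metric.ball ((y : ℂ)) (y * s) := by
          rw [Metric.mem_ball, dist_eq_norm, add_sub_cancel_left]; exact hw
        have hh := Complex.hasSum_taylorSeries_on_ball hfd hmem
        have heq : (fun k => ((k.factorial : ℂ)⁻¹ * iteratedDeriv k f (y : ℂ)) * w ^ k) =
            fun k : ℕ => (k.factorial : ℂ)⁻¹ • ((y : ℂ) + w - (y : ℂ)) ^ k •
              iteratedDeriv k f (y : ℂ) := by
          funext k
          rw [smul_eq_mul, smul_eq_mul, add_sub_cancel_left]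
          ring
        rw [heq]
        exact hh
      have hT2 : ∀ w : ℂ, ‖w‖ < y * s → HasSum
          (fun k => (∑ j ∈ Finset.range (n + 1), (n.choose j : ℂ) * (y : ℂ) ^ (n - j) *
            (if j ≤ k then b (k - j) else 0)) * w ^ k) (f ((y : ℂ) + w)) := by
        intro w hw
        have hx : ‖((y : ℂ) + w) - (y : ℂ)‖ < y * s := by rw [add_sub_cancel_left]; exact hw
        have hνx := hTaylor ((y : ℂ) + w) hx
        rw [add_sub_cancel_left] at hνx
        have hterm : ∀ j : ℕ, HasSum (fun k => (if j ≤ k then b (k - j) else 0) * w ^ k)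
            (w ^ j * ν ((y : ℂ) + w)) := by
          intro j
          have h1 : HasSum (fun k : ℕ => (if j ≤ k + j then b (k + j - j) else 0) * w ^ (k + j))
              (w ^ j * ν ((y : ℂ) + w)) := by
            have hmul := hνx.mul_left (w ^ j)
            have heq : (fun k : ℕ => (if j ≤ k + j then b (k + j - j) else 0) * w ^ (k + j)) =
                fun k => w ^ j * (b k * w ^ k) := by
              funext k
              rw [if_pos (Nat.le_add_left j k), Nat.add_sub_cancel, pow_add]
              ring
            rw [heq]
            exact hmul
          have h2 := (hasSum_nat_add_iff
            (f := fun k : ℕ => (if j ≤ k then b (k - j) else 0) * w ^ k) j).mp h1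
          have hzero : ∑ i ∈ Finset.range j, (if j ≤ i then b (i - j) else 0) * w ^ i = 0 := by
            apply Finset.sum_eq_zero
            intro i hi
            have := Finset.mem_range.mp hi
            rw [if_neg (by omega), zero_mul]
          rw [hzero, add_zero] at h2
          exact h2
        have hcomb := hasSum_sum (s := Finset.range (n + 1))
          (f := fun j k => ((n.choose j : ℂ) * (y : ℂ) ^ (n - j)) *
            ((if j ≤ k then b (k - j) else 0) * w ^ k))
          (a := fun j => ((n.choose j : ℂ) * (y : ℂ) ^ (n - j)) * (w ^ j * ν ((y : ℂ) + w)))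
          (fun j _ => (hterm j).mul_left _)
        have hval : ∑ j ∈ Finset.range (n + 1),
            ((n.choose j : ℂ) * (y : ℂ) ^ (n - j)) * (w ^ j * ν ((y : ℂ) + w))
            = f ((y : ℂ) + w) := by
          have hstep : ∀ j ∈ Finset.range (n + 1),
              ((n.choose j : ℂ) * (y : ℂ) ^ (n - j)) * (w ^ j * ν ((y : ℂ) + w)) =
              (w ^ j * (y : ℂ) ^ (n - j) * (n.choose j : ℂ)) * ν ((y : ℂ) + w) := by
            intro j _
            ring
          rw [Finset.sum_congr rfl hstep, ← Finset.sum_mul, ← add_pow, add_comm w ((y : ℂ))]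
        have heqf : (fun k => ∑ j ∈ Finset.range (n + 1),
            ((n.choose j : ℂ) * (y : ℂ) ^ (n - j)) * ((if j ≤ k then b (k - j) else 0) * w ^ k)) =
            fun k => (∑ j ∈ Finset.range (n + 1), (n.choose j : ℂ) * (y : ℂ) ^ (n - j) *
              (if j ≤ k then b (k - j) else 0)) * w ^ k := by
          funext k
          rw [Finset.sum_mul]
          exact Finset.sum_congr rfl (fun j _ => by ring)
        rw [heqf, hval] at hcomb
        exact hcomb
      have huniq := coeff_unique hys hys hT2 hT1
      have hcoe := congrFun huniq n
      have hlhs : ∑ j ∈ Finset.range (n + 1), (n.choose j : ℂ) * (y : ℂ) ^ (n - j) *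
          (if j ≤ n then b (n - j) else 0) = A n := by
        have hstep : ∀ j ∈ Finset.range (n + 1),
            (n.choose j : ℂ) * (y : ℂ) ^ (n - j) * (if j ≤ n then b (n - j) else 0) =
            (fun i => (n.choose i : ℂ) * (y : ℂ) ^ i * b i) (n - j) := by
          intro j hj
          have hjn : j ≤ n := Nat.lt_succ_iff.mp (Finset.mem_range.mp hj)
          rw [if_pos hjn]
          simp only
          rw [Nat.choose_symm hjn]
        rw [Finset.sum_congr rfl hstep, hAdef]
        have := Finset.sum_range_reflect (fun i => (n.choose i : ℂ) * (y : ℂ) ^ i * b i) (n + 1)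
        simp only [Nat.add_sub_cancel] at this
        exact this
      rw [wcoef, one_div, ← hcoe, hlhs]
    intro z hz
    have hfin := hTh z hz
    rw [← hAc] at hfin
    have heq : (fun n : ℕ => wcoef ν n y * z ^ n) = fun n => A n * z ^ n := by
      funext n; rw [hwA n]
    rw [heq]
    exact hfin
  refine ⟨main, ?_⟩
  intro y hy t ht
  have hr : Real.exp (-t) < s := by
    rw [← Real.exp_log hs0]
    exact Real.exp_lt_exp.mpr (by linarith)
  have hz : ‖((Real.exp (-t) : ℝ) : ℂ)‖ < s := by
    rw [Complex.norm_real, Real.norm_eq_abs, _root_.abs_of_nonneg (Real.exp_nonneg _)]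
    exact hr
  have hsum := (main y hy _ hz).summable
  have htend := hsum.tendsto_atTop_zero.norm
  rw [norm_zero] at htend
  obtain ⟨C, hCub⟩ := htend.bddAbove_range
  have hC0 : 0 ≤ C := le_trans (norm_nonneg _) (hCub (Set.mem_range_self 0))
  refine ⟨C + 1, by linarith, ?_⟩
  intro n hn
  have hb := hCub (Set.mem_range_self n)
  rw [norm_mul, norm_pow, Complex.norm_real, Real.norm_eq_abs,
    _root_.abs_of_nonneg (Real.exp_nonneg _), ← Real.exp_nat_mul] at hb
  have he : Real.exp (↑n * -t) = (Real.exp (t * n))⁻¹ := by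
    rw [← Real.exp_neg]; ring_nf
  rw [he] at hb
  have hepos : 0 < Real.exp (t * n) := Real.exp_pos _
  calc ‖wcoef ν n y‖ = ‖wcoef ν n y‖ * (Real.exp (t * n))⁻¹ * Real.exp (t * n) := by
        field_simp
    _ ≤ C * Real.exp (t * n) := by
        apply mul_le_mul_of_nonneg_right hb hepos.le
    _ ≤ (C + 1) * Real.exp (t * n) := by nlinarith
end

section
/- Let H be a complex Hilbert space, P : H → H a bounded linear operator, and (u_n)_{n∈ℕ} a sequence of nonzero vectors with P u_n = λ_n u_n, where the λ_n ∈ ℂ are pairwise distinct, and suppose the linear span of {u_n : n ∈ ℕ} is dense in H. Then: (a) the residual spectrum of P is empty, i.e. for every λ ∈ ℂ, if P − λ·Id is injective then the range of P − λ·Id is dense in H; (b) if moreover there exists a sequence (v_n) in H biorthogonal to (u_n) (i.e. ⟨v_m, u_n⟩ = δ_{nm}, the inner product being conjugate-linear in its first argument), then for every n: P* v_n = conj(λ_n) v_n, the kernel of P* − conj(λ_n)·Id equals the one-dimensional span of v_n, and Ker( (P* − conj(λ_n)·Id)² ) = Ker( P* − conj(λ_n)·Id ); that is, conj(λ_n)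 is an eigenvalue of the adjoint P* with geometric and algebraic multiplicity one. (Paper: Proposition 'prop:sequence-spectrum', item 1.) -/
/-!
If `λ` is not an eigenvalue, every `u i` lies in the range of `P - λ`, so that range contains the
dense span of the `u i`. For the adjoint, pairing with an eigenvector `u m` turns `P* - conj μ` into
multiplication by `conj (λ_m - μ)`. Hence a vector killed by `P* - conj λ_n` is orthogonal to every
`u m` with `m ≠ n` and is therefore a multiple of `v n`; and since `u n` is orthogonal to the range
of `P* - conj λ_n`, while `⟪u n, v n⟫ = 1`, that range meets the kernel only in `0`.
-/

open ContinuousLinearMap Submodule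
open scoped InnerProductSpace

section Eigenvectors

variable {𝕜 E ι : Type*} [NontriviallyNormedField 𝕜] [NormedAddCommGroup E] [NormedSpace 𝕜 E]

theorem sub_smul_id_apply_of_apply_eq_smul {P : E →L[𝕜] E} {x : E} {μ : 𝕜} (hx : P x = μ • x)
    (c : 𝕜) : (P - c • ContinuousLinearMap.id 𝕜 E) x = (μ - c) • x := by
  simp [hx, sub_smul]

theorem denseRange_sub_smul_id_of_injective {P : E →L[𝕜] E} {u : ι → E} {l : ι → 𝕜}
    (hu : ∀ i, u i ≠ 0) (heig : ∀ i, P (u i) = l i • u i)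
    (hdense : Dense (span 𝕜 (Set.range u) : Set E)) {lam : 𝕜}
    (hinj : Function.Injective (P - lam • ContinuousLinearMap.id 𝕜 E)) :
    DenseRange (P - lam • ContinuousLinearMap.id 𝕜 E) := by
  set T := P - lam • ContinuousLinearMap.id 𝕜 E
  have hTu (i : ι) : T (u i) = (l i - lam) • u i := sub_smul_id_apply_of_apply_eq_smul (heig i) lam
  have hne (i : ι) : l i - lam ≠ 0 := fun h =>
    hu i (hinj (by rw [hTu, h, zero_smul, map_zero]))
  have hspan : span 𝕜 (Set.range u) ≤ LinearMap.range (T : E →ₗ[𝕜] E) := by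
    rw [span_le]
    rintro _ ⟨i, rfl⟩
    exact ⟨(l i - lam)⁻¹ • u i, by simp [hTu, smul_smul, inv_mul_cancel₀ (hne i)]⟩
  exact hdense.mono fun x hx => by simpa using hspan hx

end Eigenvectors

section Adjoint

variable {𝕜 H ι : Type*} [RCLike 𝕜] [NormedAddCommGroup H] [InnerProductSpace 𝕜 H]

theorem eq_zero_of_inner_eq_zero_of_dense_span {u : ι → H}
    (hdense : Dense (span 𝕜 (Set.range u) : Set H)) {w : H} (hw : ∀ i, ⟪u i, w⟫_𝕜 = 0) :
    w = 0 :=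
  hdense.eq_zero_of_inner_left 𝕜 fun _ hx => by
    have hle : span 𝕜 (Set.range u) ≤ LinearMap.ker (innerₛₗ 𝕜 w) :=
      span_le.mpr (Set.range_subset_iff.mpr fun i => inner_eq_zero_symm.mp (hw i))
    exact hle hx

theorem inner_eq_ite_of_biorthogonal [DecidableEq ι] {u v : ι → H}
    (hbi : ∀ m n, ⟪v m, u n⟫_𝕜 = if n = m then 1 else 0) (m n : ι) :
    ⟪u m, v n⟫_𝕜 = if m = n then 1 else 0 := by
  rw [← inner_conj_symm, hbi]
  split_ifs <;> simp

variable [CompleteSpace H]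

theorem inner_adjoint_sub_smul_id_apply_of_apply_eq_smul {P : H →L[𝕜] H} {x : H} {μ : 𝕜}
    (hx : P x = μ • x) (c : 𝕜) (w : H) :
    ⟪x, (adjoint P - (starRingEnd 𝕜) c • ContinuousLinearMap.id 𝕜 H) w⟫_𝕜
      = (starRingEnd 𝕜) (μ - c) * ⟪x, w⟫_𝕜 := by
  simp only [sub_apply, smul_apply, id_apply, inner_sub_right, adjoint_inner_right, hx,
    inner_smul_left, inner_smul_right, map_sub]
  ring

variable [DecidableEq ι] {P : H →L[𝕜] H} {u v : ι → H} {l : ι → 𝕜}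
  (heig : ∀ i, P (u i) = l i • u i) (hdense : Dense (span 𝕜 (Set.range u) : Set H))
  (hbi : ∀ m n, ⟪v m, u n⟫_𝕜 = if n = m then 1 else 0)
include heig hdense hbi

theorem adjoint_apply_biorthogonal (n : ι) :
    adjoint P (v n) = (starRingEnd 𝕜) (l n) • v n := by
  have hT : (adjoint P - (starRingEnd 𝕜) (l n) • ContinuousLinearMap.id 𝕜 H) (v n) = 0 := by
    refine eq_zero_of_inner_eq_zero_of_dense_span hdense fun m => ?_
    rw [inner_adjoint_sub_smul_id_apply_of_apply_eq_smul (heig m),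
      inner_eq_ite_of_biorthogonal hbi]
    split_ifs with hmn
    · simp [hmn]
    · rw [mul_zero]
  simpa [sub_eq_zero] using hT

theorem ker_adjoint_sub_smul_id_eq_span_biorthogonal (hl : Function.Injective l) (n : ι) :
    LinearMap.ker ((adjoint P - (starRingEnd 𝕜) (l n) • ContinuousLinearMap.id 𝕜 H : H →L[𝕜] H)
      : H →ₗ[𝕜] H) = span 𝕜 {v n} := by
  set T := adjoint P - (starRingEnd 𝕜) (l n) • ContinuousLinearMap.id 𝕜 H
  refine le_antisymm (fun w (hw : T w = 0) => ?_) ?_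
  · have hperp (m : ι) (hmn : m ≠ n) : ⟪u m, w⟫_𝕜 = 0 := by
      have h := inner_adjoint_sub_smul_id_apply_of_apply_eq_smul (heig m) (l n) w
      rw [hw, inner_zero_right, eq_comm, mul_eq_zero, map_eq_zero, sub_eq_zero] at h
      exact h.resolve_left (hl.ne hmn)
    have hw_eq : w = ⟪u n, w⟫_𝕜 • v n := by
      rw [← sub_eq_zero]
      refine eq_zero_of_inner_eq_zero_of_dense_span hdense fun m => ?_
      rw [inner_sub_right, inner_smul_right, inner_eq_ite_of_biorthogonal hbi]
      by_cases hmn : m = n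
      · simp [hmn]
      · simp [hmn, hperp m hmn]
    rw [hw_eq]
    exact smul_mem _ _ (mem_span_singleton_self _)
  · rw [span_singleton_le_iff_mem, LinearMap.mem_ker, coe_coe, sub_apply, smul_apply, id_apply,
      adjoint_apply_biorthogonal heig hdense hbi n, sub_self]

theorem ker_sq_adjoint_sub_smul_id_eq_ker (hl : Function.Injective l) (n : ι) :
    LinearMap.ker (((adjoint P - (starRingEnd 𝕜) (l n) • ContinuousLinearMap.id 𝕜 H)
        ∘L (adjoint P - (starRingEnd 𝕜) (l n) • ContinuousLinearMap.id 𝕜 H) : H →L[𝕜] H)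
        : H →ₗ[𝕜] H)
      = LinearMap.ker
        ((adjoint P - (starRingEnd 𝕜) (l n) • ContinuousLinearMap.id 𝕜 H : H →L[𝕜] H)
        : H →ₗ[𝕜] H) := by
  set T := adjoint P - (starRingEnd 𝕜) (l n) • ContinuousLinearMap.id 𝕜 H
  refine le_antisymm (fun w (hw : T (T w) = 0) => ?_) (LinearMap.ker_le_ker_comp _ _)
  obtain ⟨c, hc⟩ : ∃ c : 𝕜, c • v n = T w := by
    rw [← mem_span_singleton, ← ker_adjoint_sub_smul_id_eq_span_biorthogonal heig hdense hbi hl n]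
    exact hw
  have horth : ⟪u n, T w⟫_𝕜 = 0 := by
    rw [inner_adjoint_sub_smul_id_apply_of_apply_eq_smul (heig n), sub_self, map_zero, zero_mul]
  rw [← hc, inner_smul_right, inner_eq_ite_of_biorthogonal hbi, if_pos rfl, mul_one] at horth
  change T w = 0
  rw [← hc, horth, zero_smul]

end Adjoint

/-- for a bounded operator `P` on a complex Hilbert space possessing a
complete system of eigenvectors with pairwise distinct eigenvalues, the residual spectrum
is empty; and if there is a biorthogonal sequence `(v_n)`, then each `conj(λ_n)` is an
eigenvalue of `P*` with geometric and algebraic multiplicity one. -/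
theorem complete_eigenvectors_residual_spectrum_empty
    {H : Type*} [NormedAddCommGroup H] [InnerProductSpace ℂ H] [CompleteSpace H]
    (P : H →L[ℂ] H) (u : ℕ → H) (l : ℕ → ℂ)
    (hu : ∀ n, u n ≠ 0)
    (hl : Function.Injective l)
    (heig : ∀ n, P (u n) = l n • u n)
    (hdense : Dense ((Submodule.span ℂ (Set.range u) : Submodule ℂ H) : Set H)) :
    (∀ lam : ℂ, Function.Injective ⇑(P - lam • ContinuousLinearMap.id ℂ H) →
      DenseRange ⇑(P - lam • ContinuousLinearMap.id ℂ H))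
    ∧ (∀ v : ℕ → H, (∀ m n : ℕ, (inner ℂ (v m) (u n) : ℂ) = if n = m then 1 else 0) →
        ∀ n : ℕ,
          ContinuousLinearMap.adjoint P (v n) = (starRingEnd ℂ) (l n) • v n
        ∧ LinearMap.ker
              ((ContinuousLinearMap.adjoint P
                - (starRingEnd ℂ) (l n) • ContinuousLinearMap.id ℂ H) : H →ₗ[ℂ] H)
            = Submodule.span ℂ {v n}
        ∧ LinearMap.ker
              (((ContinuousLinearMap.adjoint P
                  - (starRingEnd ℂ) (l n) • ContinuousLinearMap.id ℂ H)
                ∘L (ContinuousLinearMap.adjoint P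
                  - (starRingEnd ℂ) (l n) • ContinuousLinearMap.id ℂ H)) : H →ₗ[ℂ] H)
            = LinearMap.ker
                ((ContinuousLinearMap.adjoint P
                  - (starRingEnd ℂ) (l n) • ContinuousLinearMap.id ℂ H) : H →ₗ[ℂ] H)) :=
  ⟨fun _ hinj => denseRange_sub_smul_id_of_injective hu heig hdense hinj,
    fun _ hbi n => ⟨adjoint_apply_biorthogonal heig hdense hbi n,
      ker_adjoint_sub_smul_id_eq_span_biorthogonal heig hdense hbi hl n,
      ker_sq_adjoint_sub_smul_id_eq_ker heig hdense hbi hl n⟩⟩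
end

section
/- Let φ be a nondegenerate Bernstein function, so that φ(k) > 0 for every integer k ≥ 1. Set W_φ(1) = 1 and W_φ(n+1) = ∏_{k=1}^n φ(k), and define the polynomials P_n(x) = ∑_{k=0}^n (−1)^k binom(n,k) x^k / W_φ(k+1) and P^{T₁}_n(x) = ∑_{k=0}^n (−1)^k binom(n,k) (k+1) φ(1) x^k / W_φ(k+2). Then for every integer n ≥ 2 and every x ∈ ℝ, the perturbed three-term recurrence P_n(x) = (2 − 1/n) P_{n−1}(x) − (x/(n φ(1))) P^{T₁}_{n−1}(x) − (1 − 1/n) P_{n−2}(x) holds. (Paper: Theorem on eigenfunctions, item on the three-term perturbed recurrence relation; here P^{T₁}_n is the polynomial associated to T₁φ(u) = (u/(u+1)) φ(u+1), for which W_{T₁φ}(k+1) = W_φ(k+2)/((k+1) φ(1)).) -/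
/-!
Write `t_k = (-1)^k x^k / W_φ(k+1)`, so that `P_n(x) = ∑ binom(n,k) t_k` and
`x P^{T₁}_n(x) = -φ(1) ∑ (k+1) binom(n,k) t_{k+1}`. After multiplying by `n`, comparing the
coefficients of `t_{k+1}` reduces the recurrence to the binomial identity
`n binom(n,k+1) + (n-1) binom(n-2,k+1) = (2n-1) binom(n-1,k+1) + (k+1) binom(n-1,k)`,
which follows from Pascal's rule and `(n+1) binom(n,k) = (k+1) binom(n+1,k+1)`.
Dividing by `φ(1)` is legitimate because the Lévy–Khintchine integrand `1 - e^{-uy}` is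
positive on `(0,∞)`, so a nondegenerate Bernstein function is positive.
-/

open MeasureTheory

/-- `Wfun φ n = W_φ(n+1) = ∏_{k=1}^n φ(k)`. -/
noncomputable def Wfun (φ : ℝ → ℝ) (n : ℕ) : ℝ := ∏ k ∈ Finset.range n, φ ((k : ℝ) + 1)

/-- The polynomials `P_n(x) = ∑_{k=0}^n (-1)^k C(n,k) x^k / W_φ(k+1)`. -/
noncomputable def Ppoly (φ : ℝ → ℝ) (n : ℕ) (x : ℝ) : ℝ :=
  ∑ k ∈ Finset.range (n + 1), (-1 : ℝ) ^ k * (n.choose k : ℝ) * x ^ k / Wfun φ k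

/-- The polynomials `P^{T₁}_n(x) = ∑_{k=0}^n (-1)^k C(n,k) (k+1) φ(1) x^k / W_φ(k+2)`. -/
noncomputable def PTpoly (φ : ℝ → ℝ) (n : ℕ) (x : ℝ) : ℝ :=
  ∑ k ∈ Finset.range (n + 1),
    (-1 : ℝ) ^ k * (n.choose k : ℝ) * ((k : ℝ) + 1) * φ 1 * x ^ k / Wfun φ (k + 1)

open Finset Real

section Bernstein

variable {μ : Measure ℝ} {u : ℝ}

lemma ae_pos_of_measure_Iic_zero (hμ0 : μ (Set.Iic 0) = 0) : ∀ᵐ y ∂μ, 0 < y := by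
  rw [ae_iff]
  simp only [not_lt]
  exact hμ0

lemma one_sub_exp_neg_mul_pos (hu : 0 < u) {y : ℝ} (hy : 0 < y) : 0 < 1 - exp (-(u * y)) := by
  have : exp (-(u * y)) < 1 := exp_lt_one_iff.mpr (by nlinarith)
  linarith

lemma one_sub_exp_neg_mul_le (u : ℝ) {y : ℝ} (hy : 0 ≤ y) :
    1 - exp (-(u * y)) ≤ max 1 u * min 1 y := by
  rcases le_total y 1 with hy1 | hy1
  · rw [min_eq_right hy1]
    calc 1 - exp (-(u * y)) ≤ u * y := by linarith [one_sub_le_exp_neg (u * y)]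
      _ ≤ max 1 u * y := by gcongr; exact le_max_right 1 u
  · rw [min_eq_left hy1, mul_one]
    linarith [exp_pos (-(u * y)), le_max_left 1 u]

lemma integrable_one_sub_exp_neg_mul (hμ0 : μ (Set.Iic 0) = 0) (hu : 0 < u)
    (hμint : Integrable (fun y : ℝ => min 1 y) μ) :
    Integrable (fun y : ℝ => 1 - exp (-(u * y))) μ := by
  refine (hμint.const_mul (max 1 u)).mono' (by fun_prop) ?_
  filter_upwards [ae_pos_of_measure_Iic_zero hμ0] with y hy
  rw [norm_of_nonneg (one_sub_exp_neg_mul_pos hu hy).le]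
  exact one_sub_exp_neg_mul_le u hy.le

lemma integral_one_sub_exp_neg_mul_pos (hμ0 : μ (Set.Iic 0) = 0) (hu : 0 < u)
    (hμint : Integrable (fun y : ℝ => min 1 y) μ) (hμ : μ ≠ 0) :
    0 < ∫ y, (1 - exp (-(u * y))) ∂μ := by
  have hpos : ∀ᵐ y ∂μ, 0 < 1 - exp (-(u * y)) := by
    filter_upwards [ae_pos_of_measure_Iic_zero hμ0] with y hy
    exact one_sub_exp_neg_mul_pos hu hy
  rw [integral_pos_iff_support_of_nonneg_ae (hpos.mono fun _ h => h.le)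
    (integrable_one_sub_exp_neg_mul hμ0 hu hμint)]
  have hsupport : Function.support (fun y : ℝ => 1 - exp (-(u * y))) =ᵐ[μ] Set.univ := by
    rw [ae_eq_univ]
    exact ae_iff.mp (hpos.mono fun _ h => h.ne')
  rwa [measure_congr hsupport, Measure.measure_univ_pos]

lemma bernstein_pos (hμ0 : μ (Set.Iic 0) = 0) (hu : 0 < u) {m σ2 : ℝ} (hm : 0 ≤ m)
    (hσ : 0 ≤ σ2) (hμint : Integrable (fun y : ℝ => min 1 y) μ)
    (hnd : ¬ (m = 0 ∧ σ2 = 0 ∧ μ = 0)) :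
    0 < m + σ2 * u + ∫ y, (1 - exp (-(u * y))) ∂μ := by
  have hI : 0 ≤ ∫ y, (1 - exp (-(u * y))) ∂μ :=
    integral_nonneg_of_ae <| (ae_pos_of_measure_Iic_zero hμ0).mono fun _ hy =>
      (one_sub_exp_neg_mul_pos hu hy).le
  rcases hm.lt_or_eq with hm' | rfl
  · positivity
  rcases hσ.lt_or_eq with hσ' | rfl
  · positivity
  have hμ : μ ≠ 0 := fun h => hnd ⟨rfl, rfl, h⟩
  simpa using integral_one_sub_exp_neg_mul_pos hμ0 hu hμint hμ

end Bernstein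

lemma Nat.choose_perturbed_three_term (n k : ℕ) :
    (n + 2) * (n + 2).choose (k + 1) + (n + 1) * n.choose (k + 1)
      = (2 * n + 3) * (n + 1).choose (k + 1) + (k + 1) * (n + 1).choose k := by
  have pascal₂ := Nat.choose_succ_succ' (n + 1) k
  have pascal₁ := Nat.choose_succ_succ' n k
  have absorb₂ := Nat.add_one_mul_choose_eq (n + 1) k
  have absorb₁ := Nat.add_one_mul_choose_eq n k
  zify at *
  linear_combination (↑n + ↑k + 3) * pascal₂ - (↑n + 1) * pascal₁ + absorb₂ - absorb₁

lemma sum_choose_perturbed_three_term (n M : ℕ) (t : ℕ → ℝ) :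
    ((n : ℝ) + 2) * ∑ k ∈ range M, ((n + 2).choose (k + 1) : ℝ) * t k
      = (2 * n + 3) * ∑ k ∈ range M, ((n + 1).choose (k + 1) : ℝ) * t k
        + ∑ k ∈ range M, ((k : ℝ) + 1) * ((n + 1).choose k : ℝ) * t k
        - (n + 1) * ∑ k ∈ range M, (n.choose (k + 1) : ℝ) * t k := by
  simp only [mul_sum, ← sum_add_distrib, ← sum_sub_distrib]
  refine sum_congr rfl fun k _ => ?_
  have h := congrArg (Nat.cast : ℕ → ℝ) (Nat.choose_perturbed_three_term n k)
  push_cast at h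
  linear_combination t k * h

section Polynomials

variable (φ : ℝ → ℝ) (x : ℝ)

noncomputable def ppolyTerm (k : ℕ) : ℝ := (-1 : ℝ) ^ k * x ^ k / Wfun φ k

lemma Ppoly_eq_add_sum_range {n M : ℕ} (hnM : n ≤ M) :
    Ppoly φ n x
      = ppolyTerm φ x 0
        + ∑ k ∈ range M, (n.choose (k + 1) : ℝ) * ppolyTerm φ x (k + 1) := by
  have hext : Ppoly φ n x = ∑ k ∈ range (M + 1), (n.choose k : ℝ) * ppolyTerm φ x k := by
    refine sum_subset_zero_on_sdiff (range_subset_range.mpr (by omega)) ?_ ?_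
    · intro k hk
      simp only [mem_sdiff, mem_range] at hk
      simp [Nat.choose_eq_zero_of_lt (by omega : n < k)]
    · intro k _
      unfold ppolyTerm
      ring
  rw [hext, sum_range_succ', add_comm]
  simp

lemma div_mul_PTpoly (hφ1 : φ 1 ≠ 0) (c : ℝ) (n : ℕ) :
    x / (c * φ 1) * PTpoly φ n x
      = -(∑ k ∈ range (n + 1), ((k : ℝ) + 1) * (n.choose k : ℝ) * ppolyTerm φ x (k + 1))
          / c := by
  have hmul : x * PTpoly φ n x
      = -φ 1 * ∑ k ∈ range (n + 1),
          ((k : ℝ) + 1) * (n.choose k : ℝ) * ppolyTerm φ x (k + 1) := by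
    rw [PTpoly, mul_sum, mul_sum]
    refine sum_congr rfl fun k _ => ?_
    unfold ppolyTerm
    ring
  rw [div_mul_eq_mul_div, hmul]
  field_simp

end Polynomials

/-- the perturbed three-term recurrence relation for the eigenpolynomials
of a generalized Laguerre semigroup built from a nondegenerate Bernstein function. -/
theorem perturbed_three_term_recurrence
    (φ : ℝ → ℝ) (m σ2 : ℝ) (μ : Measure ℝ)
    (hm : 0 ≤ m) (hσ : 0 ≤ σ2)
    (hμ0 : μ (Set.Iic 0) = 0)
    (hμint : Integrable (fun y : ℝ => min 1 y) μ)
    (hrep : ∀ u : ℝ, 0 < u →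
      φ u = m + σ2 * u + ∫ y, (1 - Real.exp (-(u * y))) ∂μ)
    (hnd : ¬ (m = 0 ∧ σ2 = 0 ∧ μ = 0)) :
    ∀ n : ℕ, 2 ≤ n → ∀ x : ℝ,
      Ppoly φ n x
        = (2 - 1 / (n : ℝ)) * Ppoly φ (n - 1) x
          - x / ((n : ℝ) * φ 1) * PTpoly φ (n - 1) x
          - (1 - 1 / (n : ℝ)) * Ppoly φ (n - 2) x := by
  intro n hn x
  obtain ⟨N, rfl⟩ : ∃ N, n = N + 2 := ⟨n - 2, by omega⟩
  have hφ1 : φ 1 ≠ 0 := by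
    rw [hrep 1 one_pos]
    exact (bernstein_pos hμ0 one_pos hm hσ hμint hnd).ne'
  rw [show N + 2 - 1 = N + 1 by omega, show N + 2 - 2 = N by omega, div_mul_PTpoly φ x hφ1,
    Ppoly_eq_add_sum_range φ x (le_refl (N + 2)),
    Ppoly_eq_add_sum_range φ x (by omega : N + 1 ≤ N + 2),
    Ppoly_eq_add_sum_range φ x (by omega : N ≤ N + 2)]
  push_cast
  field_simp
  linear_combination sum_choose_perturbed_three_term N (N + 2) (fun k => ppolyTerm φ x (k + 1))
end
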